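/- arXiv:math/0703548 — 9 statements merged into one kernel-verified Lean document; each statement's English description precedes it below -/
import Mathlib

section
/- For all integers N ≥ 2 and M ≥ 1 there exists an integer k ≥ 1 such that N divides the binomial coefficient C(N^k, j) for every integer j with 1 ≤ j < M. -/
/-- For all integers `N ≥ 2` and `M ≥ 1` there exists an integer `k ≥ 1` such that `N`
divides the binomial coefficient `C(N^k, j)` for every integer `j` with `1 ≤ j < M`. -/
theorem stmt_0 (N M : ℕ) (hN : 2 ≤ N) (hM : 1 ≤ M) :
    ∃ k : ℕ, 1 ≤ k ∧ ∀ j : ℕ, 1 ≤ j → j < M → N ∣ Nat.choose (N ^ k) j := by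
  refine ⟨M, hM, fun j hj hjM => ?_⟩
  have hN0 : N ≠ 0 := by omega
  have hjle : j ≤ N ^ M :=
    le_trans (le_of_lt (lt_of_lt_of_le hjM (le_trans (Nat.lt_two_pow_self (n := M)).le
      (Nat.pow_le_pow_left hN M)))) le_rfl
  have hC : Nat.choose (N ^ M) j ≠ 0 := (Nat.choose_pos hjle).ne'
  have hj0 : j ≠ 0 := by omega
  -- key identity : N^M ∣ choose (N^M) j * j
  have key : N ^ M ∣ Nat.choose (N ^ M) j * j := by
    have h1 : N ^ M = (N ^ M - 1) + 1 := by
      have : 1 ≤ N ^ M := Nat.one_le_pow _ _ (by omega)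
      omega
    have h2 : j = (j - 1) + 1 := by omega
    refine ⟨Nat.choose (N ^ M - 1) (j - 1), ?_⟩
    rw [h1, h2]
    rw [← Nat.add_one_mul_choose_eq]
    simp [Nat.succ_eq_add_one]
  rw [← Nat.factorization_le_iff_dvd hN0 hC]
  intro p
  by_cases ha : N.factorization p = 0
  · simp [ha]
  have hfmul : Nat.factorization (Nat.choose (N ^ M) j * j) p
      = (Nat.choose (N ^ M) j).factorization p + j.factorization p := by
    rw [Nat.factorization_mul hC hj0]; rfl
  have hle : (N ^ M).factorization p
      ≤ Nat.factorization (Nat.choose (N ^ M) j * j) p :=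
    (Nat.factorization_le_iff_dvd (pow_ne_zero _ hN0)
      (mul_ne_zero hC hj0)).mpr key p
  rw [Nat.factorization_pow] at hle
  simp only [Finsupp.smul_apply, smul_eq_mul] at hle
  set a := N.factorization p with hadef
  set v := j.factorization p with hvdef
  set c := (Nat.choose (N ^ M) j).factorization p
  have ha1 : 1 ≤ a := Nat.one_le_iff_ne_zero.mpr ha
  have hv : v < j := Nat.factorization_lt p hj0
  have hMa : (M - 1) * 1 ≤ (M - 1) * a := Nat.mul_le_mul_left _ ha1
  have hsplit : M * a = (M - 1) * a + a := by
    rw [Nat.sub_one_mul]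
    have : a ≤ M * a := Nat.le_mul_of_pos_left a (by omega)
    omega
  rw [hfmul] at hle
  omega
end

section
/- Let 1 → K → G → Q → 1 be an extension of groups in which both K and Q are infinite virtually cyclic groups. Then G contains a subgroup of finite index isomorphic to ℤ × ℤ; in particular G is virtually abelian. -/
open Subgroup

/-- A group is virtually cyclic if it contains a cyclic subgroup of finite index. -/
def VirtuallyCyclic (G : Type*) [Group G] : Prop :=
  ∃ H : Subgroup G, IsCyclic H ∧ H.FiniteIndex

/-- A group is virtually abelian if it contains an abelian subgroup of finite index. -/
def VirtuallyAbelian (G : Type*) [Group G] : Prop :=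
  ∃ H : Subgroup G, (∀ a ∈ H, ∀ b ∈ H, a * b = b * a) ∧ H.FiniteIndex

/- ### Auxiliary lemmas -/

/-- Some nonzero power of any element lies in a finite-index subgroup. -/
lemma aux_exists_zpow_mem {G : Type*} [Group G] (H : Subgroup G) (hH : H.index ≠ 0) (x : G) :
    ∃ m : ℤ, m ≠ 0 ∧ x ^ m ∈ H := by
  haveI : H.FiniteIndex := ⟨hH⟩
  obtain ⟨a, b, hab, h⟩ := Finite.exists_ne_map_eq_of_infinite
      (fun n : ℤ => (QuotientGroup.mk (x ^ n) : G ⧸ H))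
  refine ⟨b - a, sub_ne_zero.mpr (Ne.symm hab), ?_⟩
  have h' : (x ^ a)⁻¹ * x ^ b ∈ H := QuotientGroup.eq.mp h
  have : x ^ (b - a) = (x ^ a)⁻¹ * x ^ b := by
    rw [sub_eq_neg_add, zpow_add, zpow_neg]
  rwa [this]

lemma aux_orderOf_zpow_zero {G : Type*} [Group G] {x : G} (hx : orderOf x = 0) {m : ℤ}
    (hm : m ≠ 0) : orderOf (x ^ m) = 0 := by
  by_contra h
  have h1 : (x ^ m) ^ orderOf (x ^ m) = 1 := pow_orderOf_eq_one _
  have h2 : x ^ (m * (orderOf (x ^ m) : ℤ)) = 1 := by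
    rw [zpow_mul, zpow_natCast]; exact h1
  have h3 := orderOf_dvd_iff_zpow_eq_one.mpr h2
  rw [hx] at h3
  have h4 : m * (orderOf (x ^ m) : ℤ) = 0 := by exact_mod_cast zero_dvd_iff.mp h3
  rcases mul_eq_zero.mp h4 with h5 | h5
  · exact hm h5
  · exact h (by exact_mod_cast h5)

lemma aux_index_map_equiv {G G' : Type*} [Group G] [Group G'] (e : G ≃* G') (H : Subgroup G) :
    (H.map e.toMonoidHom).index = H.index := by
  have h : H.map e.toMonoidHom = H.comap e.symm.toMonoidHom := Subgroup.map_equiv_eq_comap_symm e H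
  rw [h, Subgroup.index_comap_of_surjective _ e.symm.surjective]

lemma aux_index_zpowers_multiplicative (j : ℤ) :
    (Subgroup.zpowers (Multiplicative.ofAdd j)).index = j.natAbs := by
  set f : Multiplicative ℤ →* Multiplicative (ZMod j.natAbs) :=
    AddMonoidHom.toMultiplicative (Int.castAddHom (ZMod j.natAbs)) with hf
  have hker : f.ker = Subgroup.zpowers (Multiplicative.ofAdd j) := by
    ext x
    rw [MonoidHom.mem_ker, Subgroup.mem_zpowers_iff]
    have : f x = Multiplicative.ofAdd ((x.toAdd : ℤ) : ZMod j.natAbs) := rfl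
    rw [this]
    constructor
    · intro h
      have h0 : ((x.toAdd : ℤ) : ZMod j.natAbs) = 0 := by
        have := congrArg Multiplicative.toAdd h; simpa using this
      have hdvd : j ∣ x.toAdd := by
        have := (ZMod.intCast_zmod_eq_zero_iff_dvd _ _).mp h0
        exact (Int.natAbs_dvd).mp this
      obtain ⟨c, hc⟩ := hdvd
      refine ⟨c, ?_⟩
      apply Multiplicative.toAdd.injective
      simp [hc, mul_comm]
    · rintro ⟨k, rfl⟩
      have : ((Multiplicative.ofAdd j) ^ k).toAdd = k * j := by simp [mul_comm]
      rw [show (((((Multiplicative.ofAdd j) ^ k).toAdd : ℤ)) : ZMod j.natAbs) = ((k * j : ℤ) : ZMod j.natAbs) by rw [this]]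
      have : ((j : ℤ) : ZMod j.natAbs) = 0 := by
        rw [ZMod.intCast_zmod_eq_zero_iff_dvd]
        exact Int.natAbs_dvd.mpr dvd_rfl
      simp only [Int.cast_mul, this, mul_zero]
      rfl
  have hsurj : Function.Surjective f := by
    intro y
    obtain ⟨n, hn⟩ := ZMod.intCast_surjective (n := j.natAbs) y.toAdd
    exact ⟨Multiplicative.ofAdd n, Multiplicative.toAdd.injective (by show ((n : ℤ) : ZMod j.natAbs) = y.toAdd; exact hn)⟩
  rw [← hker, Subgroup.index_ker, MonoidHom.range_eq_top_of_surjective f hsurj]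
  rw [Nat.card_congr Subgroup.topEquiv.toEquiv]
  rw [Nat.card_congr Multiplicative.toAdd, Nat.card_zmod]

lemma aux_index_zpowers_of_gen {M : Type*} [Group M] {c : M} (hc : orderOf c = 0)
    (hT : Subgroup.zpowers c = ⊤) (j : ℤ) : (Subgroup.zpowers (c ^ j)).index = j.natAbs := by
  set f : Multiplicative ℤ →* M := zpowersHom M c with hfdef
  have hinj : Function.Injective f := by
    intro x y hxy
    have hz : Function.Injective fun n : ℤ => c ^ n :=
      injective_zpow_iff_not_isOfFinOrder.mpr (by rwa [← orderOf_eq_zero_iff])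
    exact Multiplicative.toAdd.injective (hz hxy)
  have hsurj : Function.Surjective f := by
    intro y
    have : y ∈ Subgroup.zpowers c := by rw [hT]; trivial
    obtain ⟨k, hk⟩ := Subgroup.mem_zpowers_iff.mp this
    exact ⟨Multiplicative.ofAdd k, hk⟩
  set e : Multiplicative ℤ ≃* M := MulEquiv.ofBijective f ⟨hinj, hsurj⟩ with he
  have h1 : Subgroup.zpowers (c ^ j) = (Subgroup.zpowers (Multiplicative.ofAdd j)).map
      e.toMonoidHom := by
    rw [MonoidHom.map_zpowers]
    congr 1
  rw [h1, aux_index_map_equiv, aux_index_zpowers_multiplicative]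

lemma aux_relIndex_zpowers_zpow {M : Type*} [Group M] {c : M} (hc : orderOf c = 0) (j : ℤ) :
    (Subgroup.zpowers (c ^ j)).relIndex (Subgroup.zpowers c) = j.natAbs := by
  set c' : Subgroup.zpowers c := ⟨c, Subgroup.mem_zpowers c⟩ with hc'
  have h1 : orderOf c' = 0 := by rwa [Subgroup.orderOf_mk]
  have h2 : Subgroup.zpowers c' = ⊤ := by
    ext x
    simp only [Subgroup.mem_top, iff_true]
    obtain ⟨k, hk⟩ := Subgroup.mem_zpowers_iff.mp x.2
    exact ⟨k, Subtype.ext (by simpa using hk)⟩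
  have h3 : (Subgroup.zpowers (c ^ j)).subgroupOf (Subgroup.zpowers c) =
      Subgroup.zpowers (c' ^ j) := by
    ext x
    rw [Subgroup.mem_subgroupOf, Subgroup.mem_zpowers_iff, Subgroup.mem_zpowers_iff]
    constructor
    · rintro ⟨k, hk⟩
      exact ⟨k, Subtype.ext (by simpa using hk)⟩
    · rintro ⟨k, hk⟩
      refine ⟨k, ?_⟩
      have := congrArg (Subtype.val) hk
      simpa using this
  rw [Subgroup.relIndex, h3, aux_index_zpowers_of_gen h1 h2 j]

lemma aux_gen_orderOf_zero {C : Type*} [Group C] [Infinite C] {c : C}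
    (hcT : Subgroup.zpowers c = ⊤) : orderOf c = 0 := by
  rw [orderOf_eq_zero_iff]
  intro hfin
  have h := finite_zpowers.mpr hfin
  rw [hcT] at h
  exact Set.infinite_univ (by simpa using h)

lemma aux_vc_zpowers_finiteIndex {M : Type*} [Group M] (hVC : VirtuallyCyclic M) {x : M}
    (hx : orderOf x = 0) : (Subgroup.zpowers x).FiniteIndex := by
  obtain ⟨C, hCcyc, hCfin⟩ := hVC
  obtain ⟨m, hm, hxm⟩ := aux_exists_zpow_mem C hCfin.index_ne_zero x
  set y : C := ⟨x ^ m, hxm⟩ with hy'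
  have hy : orderOf y = 0 := by rw [Subgroup.orderOf_mk]; exact aux_orderOf_zpow_zero hx hm
  haveI : Infinite C := Set.infinite_univ_iff.mp
    (((infinite_zpowers (a := y)).mpr (by rwa [← orderOf_eq_zero_iff])).mono (Set.subset_univ _))
  haveI := hCcyc
  obtain ⟨c, hc⟩ := IsCyclic.exists_generator (α := C)
  have hcT : Subgroup.zpowers c = ⊤ := by ext a; simpa using hc a
  have hoc : orderOf c = 0 := aux_gen_orderOf_zero hcT
  obtain ⟨k, hk⟩ := Subgroup.mem_zpowers_iff.mp (hc y)
  have hk0 : k ≠ 0 := by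
    rintro rfl
    rw [zpow_zero] at hk
    rw [← hk] at hy
    simp at hy
  have hidx : (Subgroup.zpowers y).index = k.natAbs := by
    rw [← hk]; exact aux_index_zpowers_of_gen hoc hcT k
  have hyx : Subgroup.zpowers (x ^ m) = (Subgroup.zpowers y).map C.subtype := by
    rw [MonoidHom.map_zpowers]; rfl
  have hrel : (Subgroup.zpowers (x ^ m)).relIndex C = k.natAbs := by
    rw [Subgroup.relIndex, Subgroup.subgroupOf, hyx,
      Subgroup.comap_map_eq_self_of_injective C.subtype_injective]
    exact hidx
  have hle : Subgroup.zpowers (x ^ m) ≤ C := Subgroup.zpowers_le.mpr hxm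
  have h0 : (Subgroup.zpowers (x ^ m)).index ≠ 0 := by
    rw [← Subgroup.relIndex_mul_index hle, hrel]
    exact Nat.mul_ne_zero (by simpa using hk0) hCfin.index_ne_zero
  haveI : (Subgroup.zpowers (x ^ m)).FiniteIndex := ⟨h0⟩
  exact Subgroup.finiteIndex_of_le (Subgroup.zpowers_le.mpr (Subgroup.zpow_mem_zpowers _ m))

lemma aux_vc_exists_orderOf_zero {M : Type*} [Group M] [Infinite M] (hVC : VirtuallyCyclic M) :
    ∃ x : M, orderOf x = 0 := by
  obtain ⟨C, hCcyc, hCfin⟩ := hVC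
  haveI : Infinite C := by
    by_contra h
    rw [not_infinite_iff_finite] at h
    haveI := h
    have h2 : Nat.card M = 0 := Nat.card_eq_zero_of_infinite
    have h1 := Subgroup.card_mul_index C
    rw [h2] at h1
    rcases Nat.mul_eq_zero.mp h1 with h3 | h3
    · exact (Nat.card_pos (α := C)).ne' h3
    · exact hCfin.index_ne_zero h3
  haveI := hCcyc
  obtain ⟨c, hc⟩ := IsCyclic.exists_generator (α := C)
  have hcT : Subgroup.zpowers c = ⊤ := by ext a; simpa using hc a
  refine ⟨(c : M), ?_⟩
  rw [Subgroup.orderOf_coe]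
  exact aux_gen_orderOf_zero hcT

lemma aux_vc_congr {A B : Type*} [Group A] [Group B] (e : A ≃* B) (h : VirtuallyCyclic A) :
    VirtuallyCyclic B := by
  obtain ⟨H, hc, hf⟩ := h
  refine ⟨H.map e.toMonoidHom, ?_, ⟨by rw [aux_index_map_equiv]; exact hf.index_ne_zero⟩⟩
  haveI := hc
  exact isCyclic_of_surjective (H.equivMapOfInjective e.toMonoidHom e.injective).toMonoidHom
    (H.equivMapOfInjective e.toMonoidHom e.injective).surjective

lemma aux_relIndex_sup_ne_zero {G : Type*} [Group G] {H N : Subgroup G} [N.Normal]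
    (h : H.relIndex N ≠ 0) : H.relIndex (H ⊔ N) ≠ 0 := by
  haveI : (H.subgroupOf N).FiniteIndex := ⟨h⟩
  have key : Function.Surjective
      (fun q : N ⧸ H.subgroupOf N =>
        (Quotient.map' (fun n : N => (⟨(n : G), Subgroup.mem_sup_right n.2⟩ : (H ⊔ N : Subgroup G)))
          (by
            intro a b hab
            rw [QuotientGroup.leftRel_apply] at hab ⊢
            exact hab) q : (H ⊔ N : Subgroup G) ⧸ H.subgroupOf (H ⊔ N))) := by
    intro q
    obtain ⟨x, rfl⟩ := QuotientGroup.mk_surjective q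
    have hx : (x : G) ∈ (↑(N ⊔ H) : Set G) := by
      rw [sup_comm]
      exact x.2
    rw [Subgroup.normal_mul] at hx
    obtain ⟨n, hn, hh, hhH, hprod⟩ := hx
    refine ⟨QuotientGroup.mk ⟨n, hn⟩, ?_⟩
    show QuotientGroup.mk _ = QuotientGroup.mk x
    rw [QuotientGroup.eq]
    rw [Subgroup.mem_subgroupOf]
    have heq : (n : G)⁻¹ * (x : G) = hh := by
      rw [← hprod]
      group
    have : ((⟨n, hn⟩ : N) : G)⁻¹ * (x : G) ∈ H := by rw [heq]; exact hhH
    simpa using this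
  have hfin : Finite ((H ⊔ N : Subgroup G) ⧸ H.subgroupOf (H ⊔ N)) := Finite.of_surjective _ key
  exact (Subgroup.finiteIndex_of_finite_quotient).index_ne_zero

lemma aux_conj_power_fix {G : Type*} [Group G] {N : Subgroup G} [N.Normal]
    (hVC : VirtuallyCyclic N) {z : N} (hz : orderOf z = 0) (g : G) :
    ∃ a : ℤ, a ≠ 0 ∧ (MulAut.conjNormal g (z ^ a) = z ^ a ∨
      MulAut.conjNormal g (z ^ a) = (z ^ a)⁻¹) := by
  set φ : MulAut N := MulAut.conjNormal g with hφ
  set w : N := φ z with hw'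
  have hw : orderOf w = 0 := (orderOf_injective φ.toMonoidHom φ.injective z).trans hz
  have hzf := aux_vc_zpowers_finiteIndex hVC hz
  have hwf := aux_vc_zpowers_finiteIndex hVC hw
  obtain ⟨m, hm, hmem⟩ := aux_exists_zpow_mem (Subgroup.zpowers w) hwf.index_ne_zero z
  obtain ⟨k, hk⟩ := Subgroup.mem_zpowers_iff.mp hmem
  have hzm : z ^ m ≠ 1 := by
    intro h1
    have := orderOf_dvd_iff_zpow_eq_one.mpr h1
    rw [hz] at this
    exact hm (by exact_mod_cast zero_dvd_iff.mp this)
  have hk0 : k ≠ 0 := by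
    rintro rfl
    rw [zpow_zero] at hk
    exact hzm hk.symm
  have e1 : (Subgroup.zpowers (z ^ m)).index = m.natAbs * (Subgroup.zpowers z).index := by
    rw [← Subgroup.relIndex_mul_index (Subgroup.zpowers_le.mpr (Subgroup.zpow_mem_zpowers _ m)),
      aux_relIndex_zpowers_zpow hz m]
  have e2 : (Subgroup.zpowers (w ^ k)).index = k.natAbs * (Subgroup.zpowers w).index := by
    rw [← Subgroup.relIndex_mul_index (Subgroup.zpowers_le.mpr (Subgroup.zpow_mem_zpowers _ k)),
      aux_relIndex_zpowers_zpow hw k]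
  have e3 : (Subgroup.zpowers w).index = (Subgroup.zpowers z).index := by
    rw [show Subgroup.zpowers w = (Subgroup.zpowers z).map φ.toMonoidHom from
      (MonoidHom.map_zpowers φ.toMonoidHom z).symm, aux_index_map_equiv]
  have e4 : k.natAbs * (Subgroup.zpowers z).index = m.natAbs * (Subgroup.zpowers z).index := by
    rw [← e3, ← e2, hk, e1, e3]
  have hnatabs : k.natAbs = m.natAbs :=
    Nat.eq_of_mul_eq_mul_right (Nat.pos_of_ne_zero hzf.index_ne_zero) e4
  rcases Int.natAbs_eq_natAbs_iff.mp hnatabs with h | h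
  · refine ⟨m, hm, Or.inl ?_⟩
    subst h
    rw [map_zpow, ← hw']
    exact hk
  · refine ⟨m, hm, Or.inr ?_⟩
    rw [map_zpow, ← hw']
    have : w ^ (-m) = z ^ m := by rw [← h, hk]
    rw [zpow_neg] at this
    rw [← this, inv_inv]

/-- Let `1 → K → G → Q → 1` be an extension of groups in which both `K` and `Q` are infinite
virtually cyclic groups.  Then `G` contains a subgroup of finite index isomorphic to `ℤ × ℤ`;
in particular `G` is virtually abelian. -/
theorem stmt_5 {K G Q : Type*} [Group K] [Group G] [Group Q]
    (i : K →* G) (p : G →* Q) (hi : Function.Injective i) (hp : Function.Surjective p)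
    (hexact : i.range = p.ker)
    (hK : VirtuallyCyclic K) (hKinf : Infinite K)
    (hQ : VirtuallyCyclic Q) (hQinf : Infinite Q) :
    (∃ H : Subgroup G, H.FiniteIndex ∧ Nonempty (H ≃* Multiplicative (ℤ × ℤ))) ∧
      VirtuallyAbelian G := by
  classical
  set N := p.ker with hN
  let e : K ≃* N := (MonoidHom.ofInjective hi).trans (MulEquiv.subgroupCongr hexact)
  have hVCN : VirtuallyCyclic N := aux_vc_congr e hK
  obtain ⟨x, hx⟩ := aux_vc_exists_orderOf_zero hK
  set z : N := e x with hzdef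
  have hz : orderOf z = 0 := (orderOf_injective e.toMonoidHom e.injective x).trans hx
  obtain ⟨t, ht⟩ := aux_vc_exists_orderOf_zero hQ
  obtain ⟨g₀, hg₀⟩ := hp t
  obtain ⟨a, ha, hcase⟩ := aux_conj_power_fix hVCN hz g₀
  set u : G := ((z ^ a : N) : G) with hu
  have hu_mem : u ∈ N := (z ^ a).2
  have hu_ord : orderOf u = 0 := by
    rw [hu, Subgroup.orderOf_coe]
    exact aux_orderOf_zpow_zero hz ha
  -- find g commuting with u whose image has infinite order
  have hmain : ∃ g : G, orderOf (p g) = 0 ∧ g * u * g⁻¹ = u := by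
    rcases hcase with h | h
    · refine ⟨g₀, by rw [hg₀]; exact ht, ?_⟩
      have := congrArg (Subtype.val) h
      rw [MulAut.conjNormal_apply] at this
      exact this
    · refine ⟨g₀ ^ 2, ?_, ?_⟩
      · have : p (g₀ ^ 2) = t ^ (2 : ℤ) := by rw [map_pow, hg₀, zpow_two, pow_two]
        rw [this]
        exact aux_orderOf_zpow_zero ht two_ne_zero
      · have hconj : g₀ * u * g₀⁻¹ = u⁻¹ := by
          have := congrArg (Subtype.val) h
          rw [MulAut.conjNormal_apply] at this
          simpa [hu] using this
        have h1 : g₀ ^ 2 * u * (g₀ ^ 2)⁻¹ = g₀ * (g₀ * u * g₀⁻¹) * g₀⁻¹ := by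
          rw [pow_two, mul_inv_rev]
          simp [mul_assoc]
        have h2 : g₀ * u⁻¹ * g₀⁻¹ = (g₀ * u * g₀⁻¹)⁻¹ := by
          simp [mul_assoc]
        rw [h1, hconj, h2, hconj, inv_inv]
  obtain ⟨g, hg, hfix⟩ := hmain
  have hcomm : Commute u g := by
    have h1 : g * u * g⁻¹ * g = u * g := by rw [hfix]
    show u * g = g * u
    rw [← h1]
    simp [mul_assoc]
  -- the homomorphism ℤ² → G
  let ψ : Multiplicative (ℤ × ℤ) →* G := MonoidHom.mk'
    (fun v => u ^ v.toAdd.1 * g ^ v.toAdd.2)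
    (by
      intro v w
      show u ^ (v.toAdd.1 + w.toAdd.1) * g ^ (v.toAdd.2 + w.toAdd.2) = _
      have key : g ^ v.toAdd.2 * u ^ w.toAdd.1 = u ^ w.toAdd.1 * g ^ v.toAdd.2 :=
        ((hcomm.zpow_zpow w.toAdd.1 v.toAdd.2).symm).eq
      have hre : u ^ v.toAdd.1 * g ^ v.toAdd.2 * (u ^ w.toAdd.1 * g ^ w.toAdd.2)
          = u ^ v.toAdd.1 * (g ^ v.toAdd.2 * u ^ w.toAdd.1) * g ^ w.toAdd.2 := by
        simp [mul_assoc]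
      rw [zpow_add, zpow_add, hre, key]
      simp [mul_assoc])
  have hψ : ∀ v : Multiplicative (ℤ × ℤ), ψ v = u ^ v.toAdd.1 * g ^ v.toAdd.2 := fun _ => rfl
  have hpu : p u = 1 := hu_mem
  have hinj : Function.Injective ψ := by
    rw [injective_iff_map_eq_one]
    intro v hv
    rw [hψ] at hv
    have h2 : (p g) ^ v.toAdd.2 = 1 := by
      have := congrArg p hv
      rw [map_mul, map_zpow, map_zpow, hpu, one_zpow, one_mul, map_one] at this
      exact this
    have hx2 : v.toAdd.2 = 0 := by
      have := orderOf_dvd_iff_zpow_eq_one.mpr h2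
      rw [hg] at this
      exact_mod_cast zero_dvd_iff.mp this
    have hx1 : v.toAdd.1 = 0 := by
      rw [hx2, zpow_zero, mul_one] at hv
      have := orderOf_dvd_iff_zpow_eq_one.mpr hv
      rw [hu_ord] at this
      exact_mod_cast zero_dvd_iff.mp this
    apply Multiplicative.toAdd.injective
    exact Prod.ext hx1 hx2
  set H : Subgroup G := ψ.range with hHdef
  have humem : u ∈ H := ⟨Multiplicative.ofAdd (1, 0), by rw [hψ]; simp⟩
  have hgmem : g ∈ H := ⟨Multiplicative.ofAdd (0, 1), by rw [hψ]; simp⟩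
  -- finite index
  have hrelN : H.relIndex N ≠ 0 := by
    have h1 : (Subgroup.zpowers u).relIndex N ≠ 0 := by
      have hmap : Subgroup.zpowers u = (Subgroup.zpowers (z ^ a)).map N.subtype := by
        rw [MonoidHom.map_zpowers]; rfl
      rw [Subgroup.relIndex, Subgroup.subgroupOf, hmap,
        Subgroup.comap_map_eq_self_of_injective N.subtype_injective]
      exact (aux_vc_zpowers_finiteIndex hVCN (aux_orderOf_zpow_zero hz ha)).index_ne_zero
    have hdvd := Subgroup.relIndex_dvd_of_le_left N (Subgroup.zpowers_le.mpr humem)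
    intro h0
    rw [h0] at hdvd
    exact h1 (zero_dvd_iff.mp hdvd)
  have hsup : H.relIndex (H ⊔ N) ≠ 0 := aux_relIndex_sup_ne_zero hrelN
  have htop : (H ⊔ N).index ≠ 0 := by
    have hmapidx : (H.map p).index = (H ⊔ p.ker).index * p.range.index := Subgroup.index_map H p
    rw [MonoidHom.range_eq_top_of_surjective p hp, Subgroup.index_top, mul_one] at hmapidx
    rw [← hmapidx]
    haveI : (Subgroup.zpowers (p g)).FiniteIndex := aux_vc_zpowers_finiteIndex hQ hg
    exact (Subgroup.finiteIndex_of_le (Subgroup.zpowers_le.mpr (Subgroup.mem_map_of_mem p hgmem))).index_ne_zero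
  have hHfin : H.index ≠ 0 := by
    rw [← Subgroup.relIndex_mul_index (le_sup_left : H ≤ H ⊔ N)]
    exact Nat.mul_ne_zero hsup htop
  refine ⟨⟨H, ⟨hHfin⟩, ⟨(MonoidHom.ofInjective hinj).symm⟩⟩, ⟨H, ?_, ⟨hHfin⟩⟩⟩
  rintro b ⟨v, rfl⟩ c ⟨w, rfl⟩
  rw [← map_mul, ← map_mul, mul_comm]
end

section
/- Let G be a group and let N be a nilpotent normal subgroup of finite index in G. Let Z be the center of N, i.e. Z = {n ∈ N : nm = mn for all m ∈ N}, regarded as a subgroup of G; then Z is normal in G, and for the quotient homomorphism q : G → G/Z the following holds: for every virtually cyclic subgroup V of G/Z, the preimage q⁻¹(V) is a virtually abelian subgroup of G. -/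
lemma aux_subgroupOf_zpowers {Q : Type*} [Group Q] (V : Subgroup Q) (v : ↥V) :
    (Subgroup.zpowers (v : Q)).subgroupOf V = Subgroup.zpowers v := by
  ext x
  simp only [Subgroup.mem_subgroupOf, Subgroup.mem_zpowers_iff]
  constructor
  · rintro ⟨m, hm⟩
    exact ⟨m, by ext; simpa using hm⟩
  · rintro ⟨m, rfl⟩
    exact ⟨m, by push_cast; rfl⟩

lemma aux_index_zpow {C : Type*} [Group C] (u : C) (hu : ∀ x : C, x ∈ Subgroup.zpowers u)
    {k : ℕ} (hk : k ≠ 0) : (Subgroup.zpowers (u ^ k)).index ≠ 0 := by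
  have hfin : Finite (C ⧸ Subgroup.zpowers (u ^ k)) := by
    have hsurj : Function.Surjective
        (fun j : Fin k => (QuotientGroup.mk (u ^ (j : ℕ)) : C ⧸ Subgroup.zpowers (u ^ k))) := by
      intro x
      induction x using QuotientGroup.induction_on with
      | H x =>
        obtain ⟨m, hm⟩ := hu x
        have hk0 : (0 : ℤ) < (k : ℤ) := by exact_mod_cast Nat.pos_of_ne_zero hk
        have hr0 : 0 ≤ m % (k : ℤ) := Int.emod_nonneg m (by exact_mod_cast hk)
        have hrk : m % (k : ℤ) < (k : ℤ) := Int.emod_lt_of_pos m hk0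
        refine ⟨⟨(m % (k : ℤ)).toNat, ?_⟩, ?_⟩
        · omega
        · simp only []
          refine (QuotientGroup.eq).mpr ?_
          refine ⟨m / (k : ℤ), ?_⟩
          have h1 : ((u ^ (((m % (k:ℤ)).toNat : ℕ))))⁻¹ * u ^ m
              = u ^ (m - m % (k : ℤ)) := by
            rw [← zpow_natCast u ((m % (k:ℤ)).toNat), Int.toNat_of_nonneg hr0,
              ← zpow_neg, ← zpow_add, neg_add_eq_sub]
          rw [← hm]
          rw [h1]
          have h2 : m - m % (k : ℤ) = (k : ℤ) * (m / (k : ℤ)) := by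
            have := Int.mul_ediv_add_emod m (k : ℤ)
            omega
          rw [h2, zpow_mul, zpow_natCast]
    exact Finite.of_surjective _ hsurj
  exact Subgroup.index_ne_zero_of_finite

/-- Let `G` be a group and `N` a nilpotent normal subgroup of finite index in `G`.  Let `Z`
be the center of `N`, regarded as a subgroup of `G`.  Then `Z` is normal in `G`, and for the
quotient homomorphism `q : G → G/Z` the following holds: for every virtually cyclic subgroup
`V` of `G/Z`, the preimage `q⁻¹(V)` is a virtually abelian subgroup of `G`. -/
theorem stmt_7 {G : Type*} [Group G] (N : Subgroup G) [N.Normal] [N.FiniteIndex]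
    [Group.IsNilpotent N] :
    ∃ _ : (Subgroup.map N.subtype (Subgroup.center N)).Normal,
      ∀ V : Subgroup (G ⧸ Subgroup.map N.subtype (Subgroup.center N)),
        VirtuallyCyclic V →
          VirtuallyAbelian
            (V.comap (QuotientGroup.mk' (Subgroup.map N.subtype (Subgroup.center N)))) := by
  set Z := Subgroup.map N.subtype (Subgroup.center N) with hZdef
  refine ⟨inferInstance, ?_⟩
  intro V hV
  obtain ⟨H, Hcyc, HfI⟩ := hV
  obtain ⟨h, hh⟩ := Hcyc.exists_generator
  set q := QuotientGroup.mk' Z with hq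
  set v : ↥V := (h : ↥V) with hv
  obtain ⟨g, hg⟩ := QuotientGroup.mk'_surjective Z ((v : G ⧸ Z))
  set k := N.index with hkdef
  have hk : k ≠ 0 := Subgroup.FiniteIndex.index_ne_zero
  have hgN : g ^ k ∈ N := N.pow_index_mem g
  set P := V.comap q with hP
  set A := (Subgroup.zpowers ((v : G ⧸ Z) ^ k)).comap q with hA
  have hvV : ((v : G ⧸ Z)) ∈ V := v.2
  have hWV : Subgroup.zpowers ((v : G ⧸ Z) ^ k) ≤ V := by
    rw [Subgroup.zpowers_le]
    exact pow_mem hvV k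
  have hAP : A ≤ P := Subgroup.comap_mono hWV
  -- decomposition of elements of A
  have key : ∀ x : G, x ∈ A → ∃ z ∈ Z, ∃ m : ℤ, x = z * (g ^ k) ^ m := by
    intro x hx
    obtain ⟨m, hm⟩ := hx
    have hqq : q ((g ^ k) ^ m) = ((v : G ⧸ Z) ^ k) ^ m := by
      rw [map_zpow, map_pow, hg]
    have hz : x * ((g ^ k) ^ m)⁻¹ ∈ Z := by
      have : q (x * ((g ^ k) ^ m)⁻¹) = 1 := by
        rw [map_mul, map_inv, hqq, ← hm, mul_inv_cancel]
      rwa [← QuotientGroup.ker_mk' Z, MonoidHom.mem_ker]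
    exact ⟨_, hz, m, by group⟩
  have hZN : Z ≤ N := by
    rintro _ ⟨n, _, rfl⟩
    exact n.2
  have hZcomm : ∀ z ∈ Z, ∀ w ∈ N, z * w = w * z := by
    rintro _ ⟨n, hn, rfl⟩ w hw
    have := Subgroup.mem_center_iff.mp hn ⟨w, hw⟩
    exact (Subtype.ext_iff.mp this).symm
  refine ⟨A.subgroupOf P, ?_, ?_⟩
  · intro a ha b hb
    rw [Subgroup.mem_subgroupOf] at ha hb
    obtain ⟨z1, hz1, m1, hx1⟩ := key _ ha
    obtain ⟨z2, hz2, m2, hx2⟩ := key _ hb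
    have hm1N : (g ^ k) ^ m1 ∈ N := Subgroup.zpow_mem N hgN m1
    have hm2N : (g ^ k) ^ m2 ∈ N := Subgroup.zpow_mem N hgN m2
    have c12 : Commute z1 z2 := hZcomm z1 hz1 z2 (hZN hz2)
    have c1y : Commute z1 ((g ^ k) ^ m2) := hZcomm z1 hz1 _ hm2N
    have cx2 : Commute ((g ^ k) ^ m1) z2 := (hZcomm z2 hz2 _ hm1N).symm
    have cxy : Commute ((g ^ k) ^ m1) ((g ^ k) ^ m2) :=
      (Commute.refl (g ^ k)).zpow_zpow m1 m2
    have : Commute (z1 * (g ^ k) ^ m1) (z2 * (g ^ k) ^ m2) :=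
      (c12.mul_left cx2).mul_right (c1y.mul_left cxy)
    ext
    show (a : G) * b = (b : G) * a
    rw [hx1, hx2]
    exact this
  · refine ⟨?_⟩
    show (A.subgroupOf P).index ≠ 0
    have e1 : (A.subgroupOf P).index = A.relIndex P := rfl
    have e2 : A.relIndex P = (Subgroup.zpowers ((v : G ⧸ Z) ^ k)).relIndex (P.map q) :=
      Subgroup.relIndex_comap _ q P
    have e3 : P.map q = V :=
      Subgroup.map_comap_eq_self_of_surjective (QuotientGroup.mk'_surjective Z) V
    rw [e1, e2, e3]
    have f1 : (Subgroup.zpowers ((v : G ⧸ Z) ^ k)).relIndex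
        (Subgroup.zpowers ((v : G ⧸ Z))) ≠ 0 := by
      set u : ↥(Subgroup.zpowers ((v : G ⧸ Z))) :=
        ⟨(v : G ⧸ Z), Subgroup.mem_zpowers _⟩ with hu
      have hcast : ((v : G ⧸ Z)) ^ k = ((u ^ k : ↥(Subgroup.zpowers ((v : G ⧸ Z)))) :
          G ⧸ Z) := by push_cast; rfl
      rw [Subgroup.relIndex, hcast, aux_subgroupOf_zpowers]
      refine aux_index_zpow u ?_ hk
      · intro x
        obtain ⟨m, hm⟩ := x.2
        exact ⟨m, by ext; simpa using hm⟩
    have f2 : (Subgroup.zpowers ((v : G ⧸ Z))).relIndex V ≠ 0 := by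
      rw [Subgroup.relIndex, aux_subgroupOf_zpowers V v]
      have hH : Subgroup.zpowers v = H := by
        ext x
        constructor
        · rintro ⟨m, rfl⟩
          exact (h ^ m).2
        · intro hx
          obtain ⟨m, hm⟩ := hh ⟨x, hx⟩
          exact ⟨m, by simpa [Subtype.ext_iff] using hm⟩
      rw [hH]
      exact HfI.index_ne_zero
    exact Subgroup.relIndex_ne_zero_trans f1 f2
end

section
/- Let p be a prime, let D be a division ring of characteristic p, and let H be a finite p-group (a finite group whose order is a power of p). Then the group ring D[H] is a local ring. -/
open MonoidAlgebra Finsupp Subgroup Finset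

noncomputable def myAug (D : Type*) [Semiring D] (H : Type*) [Monoid H] :
    MonoidAlgebra D H →+* D :=
  MonoidAlgebra.liftNCRingHom (RingHom.id D) 1 (fun _ _ => Commute.one_right _)

@[simp] lemma myAug_single {D : Type*} [Semiring D] {H : Type*} [Monoid H] (h : H) (a : D) :
    myAug D H (MonoidAlgebra.single h a) = a := by
  simp [myAug, liftNCRingHom]

lemma myAug_mapDomain {D : Type*} [Semiring D] {H Q : Type*} [Monoid H] [Monoid Q]
    (f : H →* Q) (x : MonoidAlgebra D H) :
    myAug D Q (mapDomainRingHom D f x) = myAug D H x := by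
  have : (myAug D Q).comp (mapDomainRingHom D f) = myAug D H := by
    apply MonoidAlgebra.ringHom_ext <;> intro a <;>
      simp [mapDomainRingHom, Finsupp.mapDomain_single]
  exact DFunLike.congr_fun this x

/-- `single z 1` is central when `z` is central. -/
lemma central_single {D : Type*} [Semiring D] {H : Type*} [Group H] {z : H}
    (hz : z ∈ Subgroup.center H) (f : MonoidAlgebra D H) :
    Commute (MonoidAlgebra.single z (1 : D)) f := by
  ext h
  rw [MonoidAlgebra.single_mul_apply, MonoidAlgebra.mul_single_apply, one_mul, mul_one]
  congr 1
  have hc : h * z = z * h := Subgroup.mem_center_iff.mp hz h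
  simpa [mul_assoc] using (congrArg (fun w => z⁻¹ * w * z⁻¹) hc.symm).symm

lemma mapDomain_apply_filter {α β M : Type*} [Fintype α] [DecidableEq β] [AddCommMonoid M]
    (f : α → β) (y : α →₀ M) (q : β) :
    Finsupp.mapDomain f y q = ∑ h ∈ Finset.univ.filter (fun h => f h = q), y h := by
  classical
  rw [Finsupp.mapDomain, Finsupp.sum_apply, Finset.sum_filter]
  rw [Finsupp.sum]
  rw [← Finset.sum_subset (Finset.subset_univ y.support)
    (fun h _ hns => by simp [Finsupp.notMem_support_iff.mp hns, Finsupp.single_apply])]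
  exact Finset.sum_congr rfl fun h _ => by rw [Finsupp.single_apply]

/-- representatives within a coset of `zpowers z` -/
lemma exists_pow_lt_mul {H : Type*} [Group H] [Finite H] {z : H}
    (hz : z ∈ Subgroup.center H) {h s : H}
    (hc : (h : H ⧸ Subgroup.zpowers z) = (s : H ⧸ Subgroup.zpowers z)) :
    ∃ j < orderOf z, h = z ^ j * s := by
  have hmem : h⁻¹ * s ∈ Subgroup.zpowers z := QuotientGroup.eq.mp hc
  obtain ⟨k, hk⟩ := hmem
  have hpos : (0 : ℤ) < (orderOf z : ℤ) := by
    exact_mod_cast (orderOf_pos z)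
  refine ⟨((-k) % (orderOf z : ℤ)).toNat, ?_, ?_⟩
  · have h1 : (-k) % (orderOf z : ℤ) < (orderOf z : ℤ) := Int.emod_lt_of_pos _ hpos
    omega
  · have h2 : (0:ℤ) ≤ (-k) % (orderOf z : ℤ) := Int.emod_nonneg _ (by omega)
    have : z ^ (((-k) % (orderOf z : ℤ)).toNat : ℤ) = z ^ (-k : ℤ) := by
      rw [Int.toNat_of_nonneg h2, zpow_mod_orderOf]
    rw [← zpow_natCast, this]
    have hk' : z ^ k = h⁻¹ * s := hk
    have hs : s = h * z ^ k := by rw [hk']; group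
    have hzh : Commute z h := ((Subgroup.mem_center_iff.mp hz h) : h * z = z * h).symm
    have hcom : Commute (z ^ (-k : ℤ)) h := hzh.zpow_left (-k)
    have key : z ^ (-k : ℤ) * s = h := by
      rw [hs, ← mul_assoc, hcom.eq, mul_assoc, ← zpow_add]
      simp
    exact key.symm

lemma coset_sum_eq_zero {D : Type*} [Semiring D] {H : Type*} [Group H] [Finite H] {z : H}
    (hz : z ∈ Subgroup.center H) (y : MonoidAlgebra D H)
    (h0 : Finsupp.mapDomain (QuotientGroup.mk (s := Subgroup.zpowers z)) y.coeff = 0) (w : H) :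
    ∑ i ∈ Finset.range (orderOf z), y.coeff (z ^ i * w) = 0 := by
  classical
  have := Fintype.ofFinite H
  have happ := DFunLike.congr_fun h0 (QuotientGroup.mk (s := Subgroup.zpowers z) w)
  rw [mapDomain_apply_filter, Finsupp.coe_zero, Pi.zero_apply] at happ
  rw [← happ]
  refine Finset.sum_bij (fun a _ => z ^ a * w) ?_ ?_ ?_ (fun a _ => rfl)
  · intro a ha
    simp only [Finset.mem_filter, Finset.mem_univ, true_and]
    refine QuotientGroup.eq.mpr ?_
    have hcw : Commute z w := ((Subgroup.mem_center_iff.mp hz w) : w * z = z * w).symm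
    have : (z ^ a * w)⁻¹ * w = (z ^ a)⁻¹ := by
      rw [mul_inv_rev, mul_assoc, ((hcw.pow_left a).inv_left).eq, ← mul_assoc,
        inv_mul_cancel, one_mul]
    rw [this]
    exact Subgroup.inv_mem _ (Subgroup.pow_mem _ (Subgroup.mem_zpowers z) a)
  · intro a ha b hb e
    exact pow_injOn_Iio_orderOf (Finset.mem_range.mp ha) (Finset.mem_range.mp hb)
      (mul_right_cancel e)
  · intro b hb
    obtain ⟨-, hb⟩ := Finset.mem_filter.mp hb
    obtain ⟨jj, hjlt, hjeq⟩ := exists_pow_lt_mul hz hb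
    exact ⟨jj, Finset.mem_range.mpr hjlt, hjeq.symm⟩

lemma exists_eq_sub_mul {D : Type*} [Ring D] {H : Type*} [Group H] [Finite H] {z : H}
    (hz : z ∈ Subgroup.center H) (y : MonoidAlgebra D H)
    (hsum : ∀ w : H, ∑ i ∈ Finset.range (orderOf z), y.coeff (z ^ i * w) = 0) :
    ∃ r, y = (MonoidAlgebra.single z (1 : D) - 1) * r := by
  classical
  set p := orderOf z with hp
  have hppos : 0 < p := orderOf_pos z
  set q : H → H ⧸ Subgroup.zpowers z := QuotientGroup.mk with hq
  have houtmk : ∀ h : H, q (Quotient.out (q h)) = q h := fun h => QuotientGroup.out_eq' _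
  have hrep : ∀ h : H, ∃ jj < p, h = z ^ jj * Quotient.out (q h) := fun h =>
    exists_pow_lt_mul hz (houtmk h).symm
  choose j hjlt hjeq using hrep
  have huniq : ∀ i k : ℕ, i < p → k < p → ∀ w : H, z ^ i * w = z ^ k * w → i = k :=
    fun i k hi hk w e => pow_injOn_Iio_orderOf hi hk (mul_right_cancel e)
  set r0 : H → D := fun h => -∑ i ∈ Finset.range (j h + 1), y.coeff (z ^ i * Quotient.out (q h))
    with hr0
  set r : MonoidAlgebra D H := MonoidAlgebra.ofCoeff (Finsupp.equivFunOnFinite.symm r0) with hrdef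
  have hr : ∀ h, r.coeff h = r0 h := fun h => by
    rw [hrdef]; simp
  refine ⟨r, ?_⟩
  ext h
  rw [sub_mul, one_mul, MonoidAlgebra.coeff_sub, Finsupp.sub_apply, MonoidAlgebra.single_mul_apply, one_mul]
  have houtz : Quotient.out (q (z⁻¹ * h)) = Quotient.out (q h) := by
    have : q (z⁻¹ * h) = q h := by
      refine (QuotientGroup.eq.mpr ?_).symm
      have : h⁻¹ * (z⁻¹ * h) = z⁻¹ := by
        have hzh : Commute z⁻¹ h :=
          Commute.inv_left ((Subgroup.mem_center_iff.mp hz h).symm)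
        rw [hzh.eq, ← mul_assoc, inv_mul_cancel, one_mul]
      rw [this]
      exact Subgroup.inv_mem _ (Subgroup.mem_zpowers z)
    rw [this]
  rcases Nat.eq_zero_or_eq_succ_pred (j h) with hj0 | hjsucc
  · -- j h = 0 : h = out
    have hhout : h = Quotient.out (q h) := by
      have := hjeq h; rwa [hj0, pow_zero, one_mul] at this
    have hzp1 : z ^ (p - 1) = z⁻¹ := by
      refine eq_inv_of_mul_eq_one_left ?_
      rw [← pow_succ, Nat.sub_add_cancel hppos]
      exact pow_orderOf_eq_one z
    have e1 : z⁻¹ * h = z ^ (p - 1) * Quotient.out (q h) := by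
      rw [hzp1, ← hhout]
    have e2 : z⁻¹ * h = z ^ (j (z⁻¹ * h)) * Quotient.out (q h) := by
      rw [← houtz]; exact hjeq _
    have hjz : j (z⁻¹ * h) = p - 1 :=
      huniq _ _ (hjlt _) (Nat.sub_lt hppos one_pos) _ (e2.symm.trans e1)
    rw [hr, hr, hr0]
    simp only [houtz, hjz, hj0, zero_add]
    rw [show p - 1 + 1 = p from Nat.sub_add_cancel hppos, hsum (Quotient.out (q h)),
      Finset.sum_range_one, pow_zero, one_mul, ← hhout]
    abel
  · -- j h = m + 1
    set m := (j h).pred with hm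
    have hjh : j h = m + 1 := hjsucc
    have hmp : m < p := by have := hjlt h; omega
    have e1 : z⁻¹ * h = z ^ m * Quotient.out (q h) := by
      have hth := hjeq h
      rw [hjh, pow_succ'] at hth
      conv_lhs => rw [hth]
      group
    have e2 : z⁻¹ * h = z ^ (j (z⁻¹ * h)) * Quotient.out (q h) := by
      rw [← houtz]; exact hjeq _
    have hjz : j (z⁻¹ * h) = m := huniq _ _ (hjlt _) hmp _ (e2.symm.trans e1)
    rw [hr, hr, hr0]
    simp only [houtz, hjz, hjh]
    rw [show y.coeff h = y.coeff (z ^ (m + 1) * Quotient.out (q h)) by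
      conv_lhs => rw [hjeq h, hjh]]
    rw [Finset.sum_range_succ (f := fun i => y.coeff (z ^ i * Quotient.out (q h))) (n := m + 1)]
    abel

lemma charP_monoidAlgebra (D : Type*) [Semiring D] (p : ℕ) [CharP D p] (H : Type*) [Monoid H] :
    CharP (MonoidAlgebra D H) p :=
  charP_of_injective_ringHom (f := MonoidAlgebra.singleOneRingHom (R := D) (M := H))
    (fun a b hab => by
      have := congrArg (fun f : MonoidAlgebra D H => f.coeff 1) hab
      simpa [MonoidAlgebra.singleOneRingHom] using this) p

universe u1 u2

lemma aug_eq_zero_isNilpotent (p : ℕ) [Fact p.Prime] (D : Type u1) [DivisionRing D] [CharP D p] :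
    ∀ (n : ℕ) (H : Type u2) [Group H] [Finite H], Nat.card H = n → IsPGroup p H →
      ∀ x : MonoidAlgebra D H, myAug D H x = 0 → IsNilpotent x := by
  intro n
  induction n using Nat.strong_induction_on with
  | _ n IH =>
  intro H _ _ hcard hH x hx
  rcases subsingleton_or_nontrivial H with hs | hnt
  · have hx1 : x = MonoidAlgebra.single 1 (x.coeff 1) := by
      ext h
      rw [Subsingleton.elim h 1]
      simp
    have hx10 : x.coeff 1 = 0 := by
      rw [← myAug_single (1 : H) (x.coeff 1), ← hx1]; exact hx
    exact ⟨1, by rw [pow_one, hx1, hx10]; simp⟩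
  · have hcenter : Nontrivial (Subgroup.center H) := IsPGroup.center_nontrivial hH
    have hcpg : IsPGroup p (Subgroup.center H) := hH.to_subgroup _
    obtain ⟨k, hk0, hck⟩ := hcpg.nontrivial_iff_card.mp hcenter
    have hdvd : p ∣ Nat.card (Subgroup.center H) := hck ▸ dvd_pow_self p hk0.ne'
    obtain ⟨g, hg⟩ := exists_prime_orderOf_dvd_card' p hdvd
    set z : H := (g : H) with hzdef
    have hz : z ∈ Subgroup.center H := g.2
    have hoz : orderOf z = p := by rw [Subgroup.orderOf_coe]; exact hg
    haveI hnormal : (Subgroup.zpowers z).Normal := by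
      constructor
      intro a ha b
      have hac : a ∈ Subgroup.center H := Subgroup.zpowers_le.mpr hz ha
      have : b * a * b⁻¹ = a := by
        rw [Subgroup.mem_center_iff.mp hac b, mul_assoc, mul_inv_cancel, mul_one]
      rwa [this]
    set Q := H ⧸ Subgroup.zpowers z with hQdef
    haveI : Finite Q := Quotient.finite _
    have hcQ : Nat.card Q * p = n := by
      rw [← hcard, ← hoz, ← Nat.card_zpowers]
      exact (Subgroup.card_eq_card_quotient_mul_card_subgroup _).symm
    have hQpos : 0 < Nat.card Q := Nat.card_pos
    have hplt : Nat.card Q < n := by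
      have hp2 : 2 ≤ p := (Fact.out : p.Prime).two_le
      have := Nat.mul_le_mul_left (Nat.card Q) hp2
      omega
    set π := MonoidAlgebra.mapDomainRingHom D (QuotientGroup.mk' (Subgroup.zpowers z)) with hπ
    have hπx : myAug D Q (π x) = 0 := by rw [myAug_mapDomain]; exact hx
    obtain ⟨m, hm⟩ := IH (Nat.card Q) hplt Q rfl (hH.to_quotient _) (π x) hπx
    have hker : Finsupp.mapDomain (QuotientGroup.mk (s := Subgroup.zpowers z)) (x ^ m).coeff = 0 := by
      have h1 : π (x ^ m) = 0 := by rw [map_pow, hm]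
      exact congrArg MonoidAlgebra.coeff h1
    have hsum := fun w => coset_sum_eq_zero hz (x ^ m) hker w
    obtain ⟨r, hr⟩ := exists_eq_sub_mul hz (x ^ m) hsum
    haveI : CharP (MonoidAlgebra D H) p := charP_monoidAlgebra D p H
    have hcomm : Commute (MonoidAlgebra.single z (1 : D) - 1) r :=
      Commute.sub_left (central_single hz r) (Commute.one_left r)
    have hzp : (MonoidAlgebra.single z (1 : D) - 1) ^ p = 0 := by
      rw [sub_pow_char_of_commute _ (Commute.one_right _), MonoidAlgebra.single_pow, one_pow,
        ← hoz, pow_orderOf_eq_one, ← MonoidAlgebra.one_def, one_pow, sub_self]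
    exact ⟨m * p, by rw [pow_mul, hr, hcomm.mul_pow, hzp, zero_mul]⟩

/-- Let `p` be a prime, `D` a division ring of characteristic `p`, and `H` a finite `p`-group.
Then the group ring `D[H]` is a local ring. -/
theorem stmt_9 (p : ℕ) [Fact p.Prime] (D : Type*) [DivisionRing D] [CharP D p]
    (H : Type*) [Group H] [Finite H] (hH : IsPGroup p H) :
    IsLocalRing (MonoidAlgebra D H) := by
  have hunit : ∀ x : MonoidAlgebra D H, myAug D H x ≠ 0 → IsUnit x := by
    intro x hx
    set c := myAug D H x with hc
    have hc0 : c ≠ 0 := hx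
    have hu1 : IsUnit (MonoidAlgebra.single (1 : H) c) := by
      refine ⟨⟨MonoidAlgebra.single 1 c, MonoidAlgebra.single 1 c⁻¹, ?_, ?_⟩, rfl⟩
      · rw [MonoidAlgebra.single_mul_single, one_mul, mul_inv_cancel₀ hc0,
          ← MonoidAlgebra.one_def]
      · rw [MonoidAlgebra.single_mul_single, one_mul, inv_mul_cancel₀ hc0,
          ← MonoidAlgebra.one_def]
    have hnil : IsNilpotent
        (MonoidAlgebra.single (1 : H) c⁻¹ * (x - MonoidAlgebra.single 1 c)) := by
      apply aug_eq_zero_isNilpotent p D (Nat.card H) H rfl hH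
      rw [map_mul, map_sub, myAug_single, myAug_single, ← hc, sub_self, mul_zero]
    have hx2 : x = MonoidAlgebra.single (1 : H) c *
        (1 + MonoidAlgebra.single (1 : H) c⁻¹ * (x - MonoidAlgebra.single 1 c)) := by
      rw [mul_add, mul_one, ← mul_assoc, MonoidAlgebra.single_mul_single, one_mul,
        mul_inv_cancel₀ hc0, ← MonoidAlgebra.one_def, one_mul]
      abel
    rw [hx2]
    exact hu1.mul (IsNilpotent.isUnit_one_add hnil)
  have haug0 : ∀ x : MonoidAlgebra D H, IsUnit x → myAug D H x ≠ 0 := by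
    intro x hu h0
    obtain ⟨u, rfl⟩ := hu
    have h1 : (myAug D H) ((u : MonoidAlgebra D H) * ((u⁻¹ : _) : MonoidAlgebra D H)) = 1 := by
      rw [u.mul_inv]; exact map_one _
    rw [map_mul, h0, zero_mul] at h1
    exact zero_ne_one h1
  refine ⟨fun {a b} hab => ?_⟩
  by_cases ha : myAug D H a = 0
  · refine Or.inr (hunit b ?_)
    have : myAug D H a + myAug D H b = 1 := by rw [← map_add, hab, map_one]
    rw [ha, zero_add] at this
    rw [this]
    exact one_ne_zero
  · exact Or.inl (hunit a ha)
end

section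
/- Every infinite virtually cyclic group G admits a surjective group homomorphism with finite kernel onto either the infinite cyclic group ℤ or the infinite dihedral group D∞. -/
open Subgroup

private lemma aux_powmem {Γ : Type*} [Group Γ] (b : Γ) (hbc : b ∈ Subgroup.center Γ)
    (hfi : (Subgroup.zpowers b).FiniteIndex) :
    ∃ e : ℕ, 0 < e ∧ (∀ g : Γ, g ^ e ∈ Subgroup.zpowers b) ∧
      ∀ g h : Γ, (g * h) ^ e = g ^ e * h ^ e := by
  haveI := hfi
  haveI hZfi : (Subgroup.center Γ).FiniteIndex :=
    Subgroup.finiteIndex_of_le (Subgroup.zpowers_le.mpr hbc)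
  have hmdvd : ((Subgroup.zpowers b).subgroupOf (Subgroup.center Γ)).index ∣
      (Subgroup.zpowers b).index :=
    Subgroup.relIndex_dvd_index_of_le (Subgroup.zpowers_le.mpr hbc)
  have hm0 : ((Subgroup.zpowers b).subgroupOf (Subgroup.center Γ)).index ≠ 0 :=
    fun h0 => hfi.index_ne_zero (zero_dvd_iff.mp (h0 ▸ hmdvd))
  have hn0 : (Subgroup.center Γ).index ≠ 0 := hZfi.index_ne_zero
  set τ := MonoidHom.transferCenterPow Γ with hτ
  have hτap : ∀ g : Γ, ((τ g : Γ)) = g ^ (Subgroup.center Γ).index :=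
    fun g => MonoidHom.transferCenterPow_apply g
  refine ⟨(Subgroup.center Γ).index *
      ((Subgroup.zpowers b).subgroupOf (Subgroup.center Γ)).index,
    Nat.pos_of_ne_zero (mul_ne_zero hn0 hm0), ?_, ?_⟩
  · intro g
    have h2 : (τ g) ^ ((Subgroup.zpowers b).subgroupOf (Subgroup.center Γ)).index ∈
        (Subgroup.zpowers b).subgroupOf (Subgroup.center Γ) :=
      ((Subgroup.zpowers b).subgroupOf (Subgroup.center Γ)).pow_index_mem _
    rw [Subgroup.mem_subgroupOf] at h2
    rw [pow_mul, ← hτap, ← SubmonoidClass.coe_pow]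
    exact h2
  · intro g h
    have hcomm : Commute ((τ g : Γ)) ((τ h : Γ)) :=
      (Subgroup.mem_center_iff.mp (τ h).2) ((τ g : Γ))
    set m := ((Subgroup.zpowers b).subgroupOf (Subgroup.center Γ)).index with hm
    set n := (Subgroup.center Γ).index with hn
    calc (g * h) ^ (n * m) = ((g * h) ^ n) ^ m := pow_mul _ _ _
      _ = ((τ (g * h) : Γ)) ^ m := by rw [hτap]
      _ = ((τ g * τ h : Subgroup.center Γ) : Γ) ^ m := by rw [map_mul]
      _ = ((τ g : Γ) * (τ h : Γ)) ^ m := by norm_cast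
      _ = (τ g : Γ) ^ m * (τ h : Γ) ^ m := hcomm.mul_pow m
      _ = (g ^ n) ^ m * (h ^ n) ^ m := by rw [hτap, hτap]
      _ = g ^ (n * m) * h ^ (n * m) := by rw [← pow_mul, ← pow_mul]

private lemma aux_F {Γ : Type*} [Group Γ] (b : Γ) (hb : ¬IsOfFinOrder b)
    (hbc : b ∈ Subgroup.center Γ) (hfi : (Subgroup.zpowers b).FiniteIndex) :
    ∃ (e : ℕ) (F : Γ → ℤ), 0 < e ∧ (∀ g, g ^ e = b ^ F g) ∧
      ∀ g h : Γ, F (g * h) = F g + F h := by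
  obtain ⟨e, he, hmem, hmul⟩ := aux_powmem b hbc hfi
  have hinj : Function.Injective fun k : ℤ => b ^ k :=
    injective_zpow_iff_not_isOfFinOrder.mpr hb
  choose F hF using fun g => Subgroup.mem_zpowers_iff.mp (hmem g)
  refine ⟨e, F, he, fun g => (hF g).symm, fun g h => hinj ?_⟩
  show b ^ F (g * h) = b ^ (F g + F h)
  rw [hF, hmul, ← hF, ← hF, zpow_add]

private lemma aux_norm {Γ : Type*} [Group Γ] (b : Γ) (hb : ¬IsOfFinOrder b)
    (e : ℕ) (he : 0 < e) (F : Γ → ℤ) (hchar : ∀ g, g ^ e = b ^ F g)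
    (hadd : ∀ g h : Γ, F (g * h) = F g + F h) :
    ∃ (d : ℤ) (F' : Γ → ℤ), d ≠ 0 ∧ (∀ g, F g = d * F' g) ∧ ∀ k : ℤ, ∃ g, F' g = k := by
  have hinj : Function.Injective fun k : ℤ => b ^ k :=
    injective_zpow_iff_not_isOfFinOrder.mpr hb
  have hFb : F b = e := by
    apply hinj
    show b ^ F b = b ^ (e : ℤ)
    rw [← hchar b, zpow_natCast]
  have hF1 : F 1 = 0 := by
    apply hinj
    show b ^ F 1 = b ^ (0 : ℤ)
    rw [← hchar 1, one_pow, zpow_zero]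
  have hneg : ∀ g : Γ, F g⁻¹ = -F g := by
    intro g
    apply hinj
    show b ^ F g⁻¹ = b ^ (-F g)
    rw [← hchar g⁻¹, inv_pow, hchar g, zpow_neg]
  let R : AddSubgroup ℤ :=
    { carrier := Set.range F
      zero_mem' := ⟨1, hF1⟩
      add_mem' := by
        rintro x y ⟨g, hg⟩ ⟨h', hh⟩
        exact ⟨g * h', by rw [hadd, hg, hh]⟩
      neg_mem' := by
        rintro x ⟨g, hg⟩
        exact ⟨g⁻¹, by rw [hneg, hg]⟩ }
  obtain ⟨d, hd⟩ := Int.subgroup_cyclic R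
  have hdR : d ∈ R := by
    rw [hd]
    exact AddSubgroup.subset_closure rfl
  have hdvd : ∀ g : Γ, ∃ k : ℤ, F g = d * k := by
    intro g
    have hmem : F g ∈ R := ⟨g, rfl⟩
    rw [hd, AddSubgroup.mem_closure_singleton] at hmem
    obtain ⟨k, hk⟩ := hmem
    exact ⟨k, by rw [← hk]; simp [mul_comm]⟩
  choose F' hF' using hdvd
  have hd0 : d ≠ 0 := by
    intro h0
    have hb' := hF' b
    rw [hFb, h0, zero_mul] at hb'
    exact he.ne' (by exact_mod_cast hb')
  obtain ⟨g₀, hg₀⟩ := hdR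
  refine ⟨d, F', hd0, hF', fun k => ⟨g₀ ^ k, ?_⟩⟩
  have h1 : F (g₀ ^ k) = d * k := by
    apply hinj
    show b ^ F (g₀ ^ k) = b ^ (d * k)
    rw [← hchar]
    calc (g₀ ^ k) ^ e = g₀ ^ (k * (e : ℤ)) := by rw [← zpow_natCast (g₀ ^ k) e, ← zpow_mul]
      _ = (g₀ ^ e) ^ k := by rw [mul_comm, zpow_mul, zpow_natCast]
      _ = (b ^ d) ^ k := by rw [hchar g₀, hg₀]
      _ = b ^ (d * k) := by rw [← zpow_mul]
  have h2 := hF' (g₀ ^ k)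
  rw [h1] at h2
  exact (mul_left_cancel₀ hd0 h2).symm

private lemma aux_finite {Γ : Type*} [Group Γ] (b : Γ) (hb : ¬IsOfFinOrder b)
    (hfi : (Subgroup.zpowers b).FiniteIndex) (K : Subgroup Γ) (e : ℕ) (he : 0 < e)
    (hK : ∀ k ∈ K, k ^ e = 1) : Finite K := by
  haveI := hfi
  haveI : Finite (Γ ⧸ Subgroup.zpowers b) := Subgroup.finite_quotient_of_finiteIndex
  have hinj : Function.Injective fun k : ℤ => b ^ k :=
    injective_zpow_iff_not_isOfFinOrder.mpr hb
  refine Finite.of_injective (fun k : K => ((k : Γ) : Γ ⧸ Subgroup.zpowers b)) ?_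
  intro k₁ k₂ hq
  have hx : (k₁ : Γ)⁻¹ * (k₂ : Γ) ∈ Subgroup.zpowers b := QuotientGroup.eq.mp hq
  obtain ⟨j, hj⟩ := Subgroup.mem_zpowers_iff.mp hx
  have hxK : (k₁ : Γ)⁻¹ * (k₂ : Γ) ∈ K := K.mul_mem (K.inv_mem k₁.2) k₂.2
  have hx1 : ((k₁ : Γ)⁻¹ * (k₂ : Γ)) ^ e = 1 := hK _ hxK
  have hj0 : j * (e : ℤ) = 0 := by
    apply hinj
    show b ^ (j * (e : ℤ)) = b ^ (0 : ℤ)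
    rw [zpow_mul, hj, zpow_natCast, hx1, zpow_zero]
  have hj' : j = 0 := by
    rcases mul_eq_zero.mp hj0 with h | h
    · exact h
    · exact absurd h (by exact_mod_cast he.ne')
  have hone : (k₁ : Γ)⁻¹ * (k₂ : Γ) = 1 := by
    rw [← hj, hj', zpow_zero]
  exact Subtype.ext (by rw [← inv_mul_eq_one]; exact hone)

/-- Every infinite virtually cyclic group `G` admits a surjective group homomorphism with
finite kernel onto either the infinite cyclic group `ℤ` or the infinite dihedral group
`D∞` (`DihedralGroup 0`). -/
theorem stmt_10 {G : Type*} [Group G] [Infinite G] (h : VirtuallyCyclic G) :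
    (∃ f : G →* Multiplicative ℤ, Function.Surjective f ∧ Finite f.ker) ∨
      (∃ f : G →* DihedralGroup 0, Function.Surjective f ∧ Finite f.ker) := by
  classical
  obtain ⟨H, hHc, hHfi⟩ := h
  haveI := hHfi
  haveI := hHc
  set N := H.normalCore with hNdef
  haveI hNfi : N.FiniteIndex := by rw [hNdef]; exact Subgroup.finiteIndex_normalCore H
  haveI hNnorm : N.Normal := H.normalCore_normal
  haveI : IsCyclic N := Subgroup.isCyclic_of_le H.normalCore_le
  haveI hNinf : Infinite N := by
    by_contra hfin
    rw [not_infinite_iff_finite] at hfin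
    have h1 : Nat.card G ≠ 0 := by
      rw [← N.card_mul_index]
      exact mul_ne_zero (Nat.card_ne_zero.mpr ⟨One.instNonempty, hfin⟩) hNfi.index_ne_zero
    haveI := Nat.finite_of_card_ne_zero h1
    exact not_finite G
  obtain ⟨g₁, hg₁⟩ := IsCyclic.exists_generator (α := N)
  set b : G := (g₁ : G) with hbdef
  have hbN : b ∈ N := g₁.2
  have hNb : N = Subgroup.zpowers b := by
    apply le_antisymm
    · intro x hx
      obtain ⟨k, hk⟩ := hg₁ ⟨x, hx⟩
      refine Subgroup.mem_zpowers_iff.mpr ⟨k, ?_⟩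
      have := congrArg (Subtype.val) hk
      rwa [SubgroupClass.coe_zpow] at this
    · exact Subgroup.zpowers_le.mpr hbN
  have hb : ¬IsOfFinOrder b := by
    rw [← infinite_zpowers, ← hNb]
    exact Set.infinite_coe_iff.mp hNinf
  have hfib : (Subgroup.zpowers b).FiniteIndex := hNb ▸ hNfi
  have hinjb : Function.Injective fun k : ℤ => b ^ k :=
    injective_zpow_iff_not_isOfFinOrder.mpr hb
  have hsign : ∀ g : G, g * b * g⁻¹ = b ∨ g * b * g⁻¹ = b⁻¹ := by
    intro g
    have hmem1 : g * b * g⁻¹ ∈ Subgroup.zpowers b := by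
      rw [← hNb]; exact hNnorm.conj_mem b hbN g
    obtain ⟨k, hk⟩ := Subgroup.mem_zpowers_iff.mp hmem1
    have hmem2 : g⁻¹ * b * g⁻¹⁻¹ ∈ Subgroup.zpowers b := by
      rw [← hNb]
      exact hNnorm.conj_mem b hbN g⁻¹
    obtain ⟨l, hl⟩ := Subgroup.mem_zpowers_iff.mp hmem2
    have hkl : l * k = 1 := by
      apply hinjb
      show b ^ (l * k) = b ^ (1 : ℤ)
      rw [zpow_mul, hl, zpow_one, conj_zpow, hk]
      
      group
    rcases Int.eq_one_or_neg_one_of_mul_eq_one' hkl with ⟨_, hk1⟩ | ⟨_, hk1⟩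
    · left; rw [← hk, hk1, zpow_one]
    · right; rw [← hk, hk1, zpow_neg, zpow_one]
  by_cases hcen : ∀ g : G, g * b = b * g
  · -- Case A : b is central, map onto ℤ
    left
    have hbc : b ∈ Subgroup.center G := Subgroup.mem_center_iff.mpr hcen
    obtain ⟨e, F, he, hchar, hadd⟩ := aux_F b hb hbc hfib
    obtain ⟨d, F', hd0, hdF, hsurj⟩ := aux_norm b hb e he F hchar hadd
    have hadd' : ∀ g h : G, F' (g * h) = F' g + F' h := by
      intro g h'
      apply mul_left_cancel₀ hd0
      rw [← hdF, hadd, mul_add, ← hdF, ← hdF]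
    set f : G →* Multiplicative ℤ :=
      MonoidHom.mk' (fun g => Multiplicative.ofAdd (F' g)) (by
        intro g h'
        simp [hadd']) with hf
    refine ⟨f, ?_, ?_⟩
    · intro x
      obtain ⟨g, hg⟩ := hsurj x.toAdd
      exact ⟨g, by simp [hf, hg]⟩
    · apply aux_finite b hb hfib f.ker e he
      intro k hk
      have hk0 : F' k = 0 := by
        rw [MonoidHom.mem_ker] at hk
        simpa [hf] using hk
      have hFk : F k = 0 := by rw [hdF, hk0, mul_zero]
      rw [hchar, hFk, zpow_zero]
  · -- Case B : map onto the infinite dihedral group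
    right
    push_neg at hcen
    obtain ⟨t, ht⟩ := hcen
    have htb : t * b * t⁻¹ = b⁻¹ := by
      rcases hsign t with h1 | h1
      · exact absurd (mul_inv_eq_iff_eq_mul.mp h1) ht
      · exact h1
    have htb' : t⁻¹ * b * t = b⁻¹ := by
      have h1 : t⁻¹ * b⁻¹ * t = b := by rw [← htb]; group
      calc t⁻¹ * b * t = (t⁻¹ * b⁻¹ * t)⁻¹ := by group
        _ = b⁻¹ := by rw [h1]
    set P := Subgroup.centralizer {b} with hP
    have hmemP : ∀ g : G, g ∈ P ↔ g * b * g⁻¹ = b := by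
      intro g
      rw [hP, Subgroup.mem_centralizer_iff]
      constructor
      · intro hgg
        exact mul_inv_eq_iff_eq_mul.mpr (hgg b rfl).symm
      · intro hgg x hx
        rw [Set.mem_singleton_iff] at hx
        subst hx
        exact (mul_inv_eq_iff_eq_mul.mp hgg).symm
    have hsign' : ∀ g : G, g ∉ P → g * b * g⁻¹ = b⁻¹ := by
      intro g hg
      rcases hsign g with h1 | h1
      · exact absurd ((hmemP g).mpr h1) hg
      · exact h1
    have hbP : b ∈ P := (hmemP b).mpr (by group)
    have htP : t ∉ P := by
      intro hc
      have h1 := (hmemP t).mp hc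
      rw [htb] at h1
      refine hb (isOfFinOrder_iff_pow_eq_one.mpr ⟨2, two_pos, ?_⟩)
      have h2 : b * b = b * b⁻¹ := by rw [h1]
      rw [pow_two, h2]
      group
    have hnn : ∀ g h' : G, g ∉ P → h' ∉ P → g * h' ∈ P := by
      intro g h' hg hh
      refine (hmemP _).mpr ?_
      have h1 := hsign' g hg
      have h2 := hsign' h' hh
      calc g * h' * b * (g * h')⁻¹ = g * (h' * b * h'⁻¹) * g⁻¹ := by group
        _ = g * b⁻¹ * g⁻¹ := by rw [h2]
        _ = (g * b * g⁻¹)⁻¹ := by group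
        _ = b := by rw [h1]; group
    have hPn : ∀ g h' : G, g ∈ P → g * h' ∈ P → h' ∈ P := by
      intro g h' hg hgh
      have h1 : g⁻¹ * (g * h') ∈ P := P.mul_mem (P.inv_mem hg) hgh
      simpa using h1
    have hnP : ∀ g h' : G, g * h' ∈ P → h' ∈ P → g ∈ P := by
      intro g h' hgh hh
      have h1 : (g * h') * h'⁻¹ ∈ P := P.mul_mem hgh (P.inv_mem hh)
      simpa using h1
    have hconjP : ∀ (s : G), s * b * s⁻¹ = b⁻¹ → ∀ p ∈ P, s * p * s⁻¹ ∈ P := by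
      intro s hs p hp
      refine (hmemP _).mpr ?_
      have hp' := (hmemP p).mp hp
      have hs' : s⁻¹ * b * s = b⁻¹ := by
        have h1 : s⁻¹ * b⁻¹ * s = b := by rw [← hs]; group
        calc s⁻¹ * b * s = (s⁻¹ * b⁻¹ * s)⁻¹ := by group
          _ = b⁻¹ := by rw [h1]
      calc (s * p * s⁻¹) * b * (s * p * s⁻¹)⁻¹
          = s * (p * (s⁻¹ * b * s) * p⁻¹) * s⁻¹ := by group
        _ = s * (p * b⁻¹ * p⁻¹) * s⁻¹ := by rw [hs']
        _ = s * (p * b * p⁻¹)⁻¹ * s⁻¹ := by group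
        _ = s * b⁻¹ * s⁻¹ := by rw [hp']
        _ = (s * b * s⁻¹)⁻¹ := by group
        _ = b := by rw [hs]; group
    have hmemt : ∀ g : G, g ∉ P → t⁻¹ * g ∈ P := by
      intro g hg
      refine (hmemP _).mpr ?_
      have h1 := hsign' g hg
      calc t⁻¹ * g * b * (t⁻¹ * g)⁻¹ = t⁻¹ * (g * b * g⁻¹) * t := by group
        _ = t⁻¹ * b⁻¹ * t := by rw [h1]
        _ = (t⁻¹ * b * t)⁻¹ := by group
        _ = b := by rw [htb']; group
    set b' : P := ⟨b, hbP⟩ with hb'def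
    have hb' : ¬IsOfFinOrder b' := by
      intro hord
      apply hb
      obtain ⟨n, hn0, hn⟩ := isOfFinOrder_iff_pow_eq_one.mp hord
      refine isOfFinOrder_iff_pow_eq_one.mpr ⟨n, hn0, ?_⟩
      have h1 := congrArg Subtype.val hn
      rwa [SubmonoidClass.coe_pow] at h1
    have hb'c : b' ∈ Subgroup.center P := by
      refine Subgroup.mem_center_iff.mpr ?_
      intro p
      refine Subtype.ext ?_
      show (p : G) * b = b * (p : G)
      exact (Subgroup.mem_centralizer_iff.mp p.2 b rfl).symm
    have hNP : N ≤ P := by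
      rw [hNb]
      exact Subgroup.zpowers_le.mpr hbP
    have hzb' : Subgroup.zpowers b' = N.subgroupOf P := by
      ext x
      rw [Subgroup.mem_subgroupOf, hNb, Subgroup.mem_zpowers_iff, Subgroup.mem_zpowers_iff]
      constructor
      · rintro ⟨k, hk⟩
        refine ⟨k, ?_⟩
        have h1 := congrArg Subtype.val hk
        rwa [SubgroupClass.coe_zpow] at h1
      · rintro ⟨k, hk⟩
        refine ⟨k, Subtype.ext ?_⟩
        rw [SubgroupClass.coe_zpow]
        exact hk
    have hfib' : (Subgroup.zpowers b').FiniteIndex := by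
      rw [hzb']
      refine ⟨?_⟩
      have hdvd : (N.subgroupOf P).index ∣ N.index :=
        Subgroup.relIndex_dvd_index_of_le hNP
      intro h0
      exact hNfi.index_ne_zero (zero_dvd_iff.mp (h0 ▸ hdvd))
    obtain ⟨e, F, he, hchar, haddF⟩ := aux_F b' hb' hb'c hfib'
    obtain ⟨d, F', hd0, hdF, hsurj⟩ := aux_norm b' hb' e he F hchar haddF
    have hinj' : Function.Injective fun k : ℤ => b' ^ k :=
      injective_zpow_iff_not_isOfFinOrder.mpr hb'
    have hadd' : ∀ p q : P, F' (p * q) = F' p + F' q := by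
      intro p q
      apply mul_left_cancel₀ hd0
      rw [← hdF, haddF, mul_add, ← hdF, ← hdF]
    have hconjF : ∀ (s : G), s * b * s⁻¹ = b⁻¹ → ∀ (p : P) (hsp : s * ↑p * s⁻¹ ∈ P),
        F ⟨s * ↑p * s⁻¹, hsp⟩ = -F p := by
      intro s hs p hsp
      apply hinj'
      show b' ^ F ⟨s * ↑p * s⁻¹, hsp⟩ = b' ^ (-F p)
      rw [← hchar]
      refine Subtype.ext ?_
      rw [SubmonoidClass.coe_pow, SubgroupClass.coe_zpow]
      show (s * ↑p * s⁻¹) ^ e = b ^ (-F p)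
      have hpe : (↑p : G) ^ e = b ^ F p := by
        have h1 := congrArg Subtype.val (hchar p)
        rwa [SubmonoidClass.coe_pow, SubgroupClass.coe_zpow] at h1
      rw [conj_pow, hpe, ← conj_zpow, hs, inv_zpow, ← zpow_neg]
    have hconjF' : ∀ (s : G), s * b * s⁻¹ = b⁻¹ → ∀ (p : P) (hsp : s * ↑p * s⁻¹ ∈ P),
        F' ⟨s * ↑p * s⁻¹, hsp⟩ = -F' p := by
      intro s hs p hsp
      apply mul_left_cancel₀ hd0
      rw [← hdF, hconjF s hs p hsp, hdF, mul_neg]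
    have httP : t * t ∈ P := hnn t t htP htP
    have ht2 : F' (⟨t * t, httP⟩ : P) = 0 := by
      have hsp : t * (t * t) * t⁻¹ ∈ P := by
        have h1 : t * (t * t) * t⁻¹ = t * t := by group
        rw [h1]; exact httP
      have h2 := hconjF' t htb ⟨t * t, httP⟩ hsp
      have heq : (⟨t * (t * t) * t⁻¹, hsp⟩ : P) = ⟨t * t, httP⟩ := Subtype.ext (by group)
      rw [heq] at h2
      omega
    have htbinv : t⁻¹ * b * t⁻¹⁻¹ = b⁻¹ := by rw [inv_inv]; exact htb'
    set Φ : G → DihedralGroup 0 := fun g =>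
      if hg : g ∈ P then DihedralGroup.r (F' ⟨g, hg⟩)
      else DihedralGroup.sr (F' ⟨t⁻¹ * g, hmemt g hg⟩) with hΦ
    have hrr : ∀ x y : ℤ, (DihedralGroup.r x * DihedralGroup.r y : DihedralGroup 0) =
        DihedralGroup.r ((x + y : ℤ)) := fun _ _ => rfl
    have hrs : ∀ x y : ℤ, (DihedralGroup.r x * DihedralGroup.sr y : DihedralGroup 0) =
        DihedralGroup.sr ((y - x : ℤ)) := fun _ _ => rfl
    have hsr : ∀ x y : ℤ, (DihedralGroup.sr x * DihedralGroup.r y : DihedralGroup 0) =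
        DihedralGroup.sr ((x + y : ℤ)) := fun _ _ => rfl
    have hss : ∀ x y : ℤ, (DihedralGroup.sr x * DihedralGroup.sr y : DihedralGroup 0) =
        DihedralGroup.r ((y - x : ℤ)) := fun _ _ => rfl
    have hΦmul : ∀ g h' : G, Φ (g * h') = Φ g * Φ h' := by
      intro g h'
      by_cases hg : g ∈ P <;> by_cases hh : h' ∈ P
      · have hgh : g * h' ∈ P := P.mul_mem hg hh
        simp only [hΦ]
        rw [dif_pos hgh, dif_pos hg, dif_pos hh, hrr]
        have h1 : F' ⟨g * h', hgh⟩ = F' ⟨g, hg⟩ + F' ⟨h', hh⟩ := hadd' ⟨g, hg⟩ ⟨h', hh⟩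
        rw [h1]
      · have hgh : g * h' ∉ P := fun hc => hh (hPn g h' hg hc)
        simp only [hΦ]
        rw [dif_neg hgh, dif_pos hg, dif_neg hh, hrs]
        have hA : t⁻¹ * g * t⁻¹⁻¹ ∈ P := hconjP t⁻¹ htbinv g hg
        have heq : (⟨t⁻¹ * (g * h'), hmemt _ hgh⟩ : P) =
            ⟨t⁻¹ * g * t⁻¹⁻¹, hA⟩ * ⟨t⁻¹ * h', hmemt h' hh⟩ := Subtype.ext (by push_cast; group)
        have h1 : F' ⟨t⁻¹ * (g * h'), hmemt _ hgh⟩ =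
            F' ⟨t⁻¹ * g * t⁻¹⁻¹, hA⟩ + F' ⟨t⁻¹ * h', hmemt h' hh⟩ := by
          rw [heq, hadd']
        have h2 : F' (⟨t⁻¹ * g * t⁻¹⁻¹, hA⟩ : P) = -F' ⟨g, hg⟩ :=
          hconjF' t⁻¹ htbinv ⟨g, hg⟩ hA
        have h3 : F' ⟨t⁻¹ * (g * h'), hmemt _ hgh⟩ =
            F' ⟨t⁻¹ * h', hmemt h' hh⟩ - F' ⟨g, hg⟩ := by rw [h1, h2]; ring
        rw [h3]
      · have hgh : g * h' ∉ P := fun hc => hg (hnP g h' hc hh)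
        simp only [hΦ]
        rw [dif_neg hgh, dif_neg hg, dif_pos hh, hsr]
        have heq : (⟨t⁻¹ * (g * h'), hmemt _ hgh⟩ : P) =
            ⟨t⁻¹ * g, hmemt g hg⟩ * ⟨h', hh⟩ := Subtype.ext (by push_cast; group)
        have h1 : F' ⟨t⁻¹ * (g * h'), hmemt _ hgh⟩ =
            F' ⟨t⁻¹ * g, hmemt g hg⟩ + F' ⟨h', hh⟩ := by rw [heq, hadd']
        rw [h1]
      · have hgh : g * h' ∈ P := hnn g h' hg hh
        simp only [hΦ]
        rw [dif_pos hgh, dif_neg hg, dif_neg hh, hss]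
        have hA : t * (t⁻¹ * g) * t⁻¹ ∈ P := hconjP t htb (t⁻¹ * g) (hmemt g hg)
        have heq : (⟨g * h', hgh⟩ : P) =
            ⟨t * (t⁻¹ * g) * t⁻¹, hA⟩ * ⟨t * t, httP⟩ * ⟨t⁻¹ * h', hmemt h' hh⟩ :=
          Subtype.ext (by push_cast; group)
        have h1 : F' ⟨g * h', hgh⟩ = F' ⟨t * (t⁻¹ * g) * t⁻¹, hA⟩ + F' ⟨t * t, httP⟩
            + F' ⟨t⁻¹ * h', hmemt h' hh⟩ := by
          rw [heq, hadd', hadd']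
        have h2 : F' (⟨t * (t⁻¹ * g) * t⁻¹, hA⟩ : P) = -F' ⟨t⁻¹ * g, hmemt g hg⟩ :=
          hconjF' t htb ⟨t⁻¹ * g, hmemt g hg⟩ hA
        have h3 : F' ⟨g * h', hgh⟩ =
            F' ⟨t⁻¹ * h', hmemt h' hh⟩ - F' ⟨t⁻¹ * g, hmemt g hg⟩ := by
          rw [h1, h2, ht2]; ring
        rw [h3]
    refine ⟨MonoidHom.mk' Φ hΦmul, ?_, ?_⟩
    · intro x
      cases x with
      | r i =>
        obtain ⟨p, hp⟩ := hsurj i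
        refine ⟨(p : G), ?_⟩
        show Φ (p : G) = _
        simp only [hΦ]
        rw [dif_pos p.2]
        have heq : (⟨(p : G), p.2⟩ : P) = p := rfl
        rw [heq, hp]
      | sr i =>
        obtain ⟨p, hp⟩ := hsurj i
        have hgP : t * (p : G) ∉ P := fun hc => htP (hnP t p hc p.2)
        refine ⟨t * (p : G), ?_⟩
        show Φ (t * (p : G)) = _
        simp only [hΦ]
        rw [dif_neg hgP]
        have heq : (⟨t⁻¹ * (t * (p : G)), hmemt _ hgP⟩ : P) = p := Subtype.ext (by group)
        rw [heq, hp]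
    · apply aux_finite b hb hfib (MonoidHom.mk' Φ hΦmul).ker e he
      intro k hk
      rw [MonoidHom.mem_ker] at hk
      have hk' : Φ k = 1 := hk
      by_cases hkP : k ∈ P
      · have h1 : Φ k = DihedralGroup.r (F' ⟨k, hkP⟩) := by
          simp only [hΦ]; rw [dif_pos hkP]
        rw [h1, DihedralGroup.one_def] at hk'
        have h0 : F' ⟨k, hkP⟩ = (0 : ℤ) := DihedralGroup.r.inj hk'
        have hFk : F ⟨k, hkP⟩ = 0 := by rw [hdF, h0, mul_zero]
        have h2 := hchar ⟨k, hkP⟩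
        rw [hFk, zpow_zero] at h2
        have h3 := congrArg Subtype.val h2
        rwa [SubmonoidClass.coe_pow] at h3
      · exfalso
        have h1 : Φ k = DihedralGroup.sr (F' ⟨t⁻¹ * k, hmemt k hkP⟩) := by
          simp only [hΦ]; rw [dif_neg hkP]
        rw [h1, DihedralGroup.one_def] at hk'
        cases hk'
end

section
/- Let F be a field, H a finite group, n ≥ 1, and A ∈ M_n(F[H]) a matrix with A² = A. Let P ⊆ F[H]ⁿ be the image of the endomorphism of the left F[H]-module F[H]ⁿ given by right multiplication with A, so P is a finitely generated projective left F[H]-module. Then for every h ∈ H, left multiplication by h restricts to an F-linear endomorphism of P whose trace over F equals |C_H(h)| · Σ_{g ∈ (h⁻¹)} a_g, where Σᵢ Aᵢᵢ = Σ_{g ∈ H} a_g · g in F[H], (h⁻¹) denotes the conjugacy class of h⁻¹ in H, C_H(h) is the centralizer of h in H, and |C_H(h)| is interpreted as an element of F. -/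
/-!
Right multiplication by the idempotent `A` is an `F`-linear projection of `F[H]ⁿ` onto `P`
commuting with left multiplication by `h`, so the trace of `h` on `P` is the trace of
`x ↦ h • (x ⬝ A)` on all of `F[H]ⁿ`. In the basis of group elements the diagonal entry at `(i, g)`
is the coefficient of `g` in `h g Aᵢᵢ`, that is the coefficient of `g⁻¹ h⁻¹ g` in `Aᵢᵢ`; as `g`
runs over `H`, each conjugate of `h⁻¹` is hit exactly `|C_H(h)|` times.
-/

open scoped Classical

noncomputable def leftMulBy {F : Type*} [Field F] {H : Type*} [Group H] {n : ℕ}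
    (P : Submodule (MonoidAlgebra F H) (Fin n → MonoidAlgebra F H)) (h : H) :
    P →ₗ[F] P where
  toFun x := ⟨(MonoidAlgebra.of F H h : MonoidAlgebra F H) • (x : Fin n → MonoidAlgebra F H),
    P.smul_mem _ x.2⟩
  map_add' x y := by apply Subtype.ext; simp
  map_smul' c x := by
    apply Subtype.ext
    simp only [SetLike.val_smul, RingHom.id_apply]
    exact smul_comm _ _ _

open Finset LinearMap

theorem LinearMap.trace_restrict_range_of_isIdempotentElem {K M : Type*} [Field K]
    [AddCommGroup M] [Module K M] [FiniteDimensional K M] {e f : M →ₗ[K] M}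
    (he : IsIdempotentElem e) (hf : ∀ x ∈ range e, f x ∈ range e) :
    trace K (range e) (f.restrict hf) = trace K M (f ∘ₗ e) := by
  have hfe : f.restrict hf = e.rangeRestrict ∘ₗ f ∘ₗ (range e).subtype := by
    ext ⟨x, hx⟩
    exact (he.mem_range_iff.mp (hf x hx)).symm
  rw [hfe, trace_comp_comm', comp_assoc]
  rfl

theorem LinearMap.trace_smul_vecMul {F R : Type*} [CommRing F] [Ring R] [Algebra F R]
    [Module.Free F R] [Module.Finite F R] {n : Type*} [Fintype n] [DecidableEq n]
    (r : R) (A : Matrix n n R) :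
    trace F (n → R) (DistribSMul.toLinearMap F (n → R) r ∘ₗ A.vecMulLinear.restrictScalars F) =
      ∑ i, trace F R (mulLeftRight F (r, A i i)) := by
  let b := Module.Free.chooseBasis F R
  rw [trace_eq_matrix_trace F (Pi.basis fun _ => b), Matrix.trace, ← univ_sigma_univ, sum_sigma]
  refine sum_congr rfl fun i _ => ?_
  rw [trace_eq_matrix_trace F b, Matrix.trace]
  refine sum_congr rfl fun g _ => ?_
  simp [toMatrix_apply, Matrix.single_vecMul, mul_assoc]

theorem MonoidAlgebra.trace_mulLeftRight_single {F H : Type*} [CommRing F] [Group H] [Fintype H]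
    (h : H) (a : MonoidAlgebra F H) :
    trace F (MonoidAlgebra F H) (mulLeftRight F (single h 1, a)) =
      ∑ g, a.coeff (g⁻¹ * h⁻¹ * g) := by
  rw [trace_eq_matrix_trace F (basis H F), Matrix.trace]
  refine sum_congr rfl fun g _ => ?_
  simp only [Matrix.diag_apply, toMatrix_apply, basis_apply, mulLeftRight_apply,
    single_mul_single, one_mul]
  show (single (h * g) 1 * a).coeff g = _
  rw [coeff_single_mul_apply, one_mul, mul_inv_rev]

theorem Subgroup.centralizer_singleton_inv {G : Type*} [Group G] (g : G) :
    Subgroup.centralizer {g⁻¹} = Subgroup.centralizer {g} := by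
  ext z
  simp only [mem_centralizer_singleton_iff]
  exact Commute.inv_right_iff (a := z) (b := g)

theorem card_filter_conj_eq_card_centralizer {G : Type*} [Group G] [Fintype G] [DecidableEq G]
    {x k : G} (hk : IsConj x k) :
    #{g : G | g⁻¹ * x * g = k} = Nat.card (Subgroup.centralizer {x}) := by
  obtain ⟨c, rfl⟩ := isConj_iff.mp hk
  rw [Nat.card_eq_fintype_card, Fintype.card_subtype]
  refine card_equiv (Equiv.mulRight c) fun g => ?_
  simp only [mem_filter, mem_univ, true_and, Equiv.coe_mulRight,
    Subgroup.mem_centralizer_singleton_iff]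
  rw [eq_mul_inv_iff_mul_eq, mul_assoc, mul_assoc, inv_mul_eq_iff_eq_mul, eq_comm]
  simp only [mul_assoc]

theorem sum_conj_eq_card_centralizer_smul {G M : Type*} [Group G] [Fintype G] [AddCommMonoid M]
    (c : G → M) (x : G) [DecidablePred (IsConj x)] :
    ∑ g, c (g⁻¹ * x * g) = Nat.card (Subgroup.centralizer {x}) • ∑ k with IsConj x k, c k := by
  have hconj : ∀ g ∈ (univ : Finset G), g⁻¹ * x * g ∈ ({k | IsConj x k} : Finset G) := fun g _ =>
    mem_filter.mpr ⟨mem_univ _, isConj_iff.mpr ⟨g⁻¹, by simp⟩⟩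
  rw [← sum_fiberwise_of_maps_to hconj, smul_sum]
  refine sum_congr rfl fun k hk => ?_
  rw [sum_congr rfl fun g hg => congrArg c (mem_filter.mp hg).2, sum_const,
    card_filter_conj_eq_card_centralizer (mem_filter.mp hk).2]

theorem MonoidAlgebra.trace_of_smul_vecMul {F H : Type*} [CommRing F] [Group H] [Fintype H]
    {n : Type*} [Fintype n] [DecidableEq n] (h : H) (A : Matrix n n (MonoidAlgebra F H)) :
    trace F (n → MonoidAlgebra F H)
        (DistribSMul.toLinearMap F (n → MonoidAlgebra F H) (of F H h) ∘ₗ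
          A.vecMulLinear.restrictScalars F) =
      ∑ g, A.trace.coeff (g⁻¹ * h⁻¹ * g) := by
  simp only [trace_smul_vecMul, of_apply, trace_mulLeftRight_single, Matrix.trace, coeff_sum,
    Matrix.diag_apply, Finsupp.finsetSum_apply]
  exact sum_comm

theorem stmt_11_general {F : Type*} [Field F] {H : Type*} [Group H] [Fintype H] [DecidableEq H]
    {n : ℕ} (A : Matrix (Fin n) (Fin n) (MonoidAlgebra F H)) (hA : A * A = A)
    (h : H) :
    LinearMap.trace F (LinearMap.range A.vecMulLinear)
        (leftMulBy (LinearMap.range A.vecMulLinear) h) =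
      (Nat.card (Subgroup.centralizer ({h} : Set H)) : F) *
        ∑ g ∈ Finset.univ.filter fun g => IsConj h⁻¹ g,
          (Matrix.trace A).coeff g := by
  have hidem : IsIdempotentElem (A.vecMulLinear.restrictScalars F) := by
    refine LinearMap.ext fun x => ?_
    simp [Matrix.vecMul_vecMul, hA]
  calc trace F (range A.vecMulLinear) (leftMulBy (range A.vecMulLinear) h)
      = trace F (Fin n → MonoidAlgebra F H)
          (DistribSMul.toLinearMap F _ (MonoidAlgebra.of F H h) ∘ₗ
            A.vecMulLinear.restrictScalars F) :=
        trace_restrict_range_of_isIdempotentElem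
          (f := DistribSMul.toLinearMap F _ (MonoidAlgebra.of F H h)) hidem
          fun _ hx => (range A.vecMulLinear).smul_mem _ hx
    _ = ∑ g, A.trace.coeff (g⁻¹ * h⁻¹ * g) := MonoidAlgebra.trace_of_smul_vecMul h A
    _ = _ := by
      rw [sum_conj_eq_card_centralizer_smul, Subgroup.centralizer_singleton_inv, nsmul_eq_mul]

/-- Let `F` be a field, `H` a finite group, `n ≥ 1`, and `A ∈ Mₙ(F[H])` with `A² = A`.
Let `P ⊆ F[H]ⁿ` be the image of right multiplication by `A` on the left `F[H]`-module
`F[H]ⁿ`.  Then for every `h ∈ H`, the trace over `F` of the `F`-linear endomorphism of `P`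
given by left multiplication with `h` equals `|C_H(h)| · Σ_{g ∈ (h⁻¹)} a_g`, where
`Σᵢ Aᵢᵢ = Σ_g a_g · g` in `F[H]`, `(h⁻¹)` is the conjugacy class of `h⁻¹` in `H` and
`C_H(h)` is the centralizer of `h` in `H`. -/
theorem stmt_11 {F : Type*} [Field F] {H : Type*} [Group H] [Fintype H] [DecidableEq H]
    {n : ℕ} (hn : 1 ≤ n) (A : Matrix (Fin n) (Fin n) (MonoidAlgebra F H)) (hA : A * A = A)
    (h : H) :
    LinearMap.trace F (LinearMap.range A.vecMulLinear)
        (leftMulBy (LinearMap.range A.vecMulLinear) h) =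
      (Nat.card (Subgroup.centralizer ({h} : Set H)) : F) *
        ∑ g ∈ Finset.univ.filter fun g => IsConj h⁻¹ g,
          (Matrix.trace A).coeff g :=
  stmt_11_general A hA h
end

section
/- Let G be a group. If every idempotent of the complex group ring ℂ[G] is trivial, then for every field F of characteristic zero every idempotent of the group ring F[G] is trivial. -/
open Cardinal Function

/-- The coefficient-wise ring hom `MonoidAlgebra k G →+* MonoidAlgebra R G`
induced by a ring hom `f : k →+* R`. -/
noncomputable def mapCf {k R G : Type*} [Semiring k] [Semiring R] [Monoid G] (f : k →+* R) :
    MonoidAlgebra k G →+* MonoidAlgebra R G :=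
  MonoidAlgebra.liftNCRingHom (MonoidAlgebra.singleOneRingHom.comp f) (MonoidAlgebra.of R G)
    (fun x y => by
      show MonoidAlgebra.single 1 (f x) * MonoidAlgebra.single y 1 =
        MonoidAlgebra.single y 1 * MonoidAlgebra.single 1 (f x)
      rw [MonoidAlgebra.single_mul_single, MonoidAlgebra.single_mul_single, one_mul, mul_one,
        one_mul, mul_one])

theorem mapCf_apply {k R G : Type*} [Semiring k] [Semiring R] [Monoid G] (f : k →+* R)
    (x : MonoidAlgebra k G) :
    mapCf f x = MonoidAlgebra.ofCoeff (Finsupp.mapRange f f.map_zero x.coeff) := by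
  induction x using MonoidAlgebra.induction_linear with
  | zero => simp
  | add a b ha hb => rw [map_add, ha, hb, MonoidAlgebra.coeff_add, Finsupp.mapRange_add f.map_add,
      MonoidAlgebra.ofCoeff_add]
  | single a b =>
      rw [MonoidAlgebra.coeff_single, Finsupp.mapRange_single, MonoidAlgebra.ofCoeff_single]
      show MonoidAlgebra.liftNCRingHom _ _ _ (MonoidAlgebra.single a b) = _
      simp [MonoidAlgebra.liftNCRingHom, MonoidAlgebra.liftNC_single,
        MonoidAlgebra.singleOneRingHom_apply, MonoidAlgebra.single_mul_single]

theorem mapCf_injective {k R G : Type*} [Semiring k] [Semiring R] [Monoid G] {f : k →+* R}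
    (hf : Function.Injective f) : Function.Injective (mapCf (G := G) f) := by
  intro x y hxy
  rw [mapCf_apply, mapCf_apply, MonoidAlgebra.ofCoeff_inj] at hxy
  ext g
  exact hf (by simpa [Finsupp.mapRange_apply] using Finsupp.ext_iff.1 hxy g)

/-- Every countable field of characteristic zero embeds into `ℂ`. -/
theorem exists_ringHom_complex (K : Type*) [Field K] [CharZero K] (hK : #K ≤ ℵ₀) :
    Nonempty (K →+* ℂ) := by
  obtain ⟨ι, v, hv⟩ := exists_isTranscendenceBasis' ℚ K
  obtain ⟨κ, w, hw⟩ := exists_isTranscendenceBasis' ℚ ℂ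
  have hι : #ι ≤ ℵ₀ := (Cardinal.mk_le_of_injective hv.1.injective).trans hK
  have hκ : ℵ₀ < #κ := by
    by_contra hle
    push_neg at hle
    have h1 := IsAlgClosed.cardinal_le_max_transcendence_basis w hw
    have h2 : #ℂ ≤ ℵ₀ := Cardinal.lift_le_aleph0.1 (h1.trans (by
      apply max_le _ le_rfl
      exact max_le Cardinal.mk_le_aleph0 (Cardinal.lift_le_aleph0.2 hle)))
    rw [mk_complex] at h2
    exact absurd h2 (not_le.2 Cardinal.aleph0_lt_continuum)
  haveI : Countable ι := Cardinal.mk_le_aleph0_iff.1 hι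
  haveI : Infinite κ := Cardinal.infinite_iff.2 hκ.le
  obtain ⟨fn, hfn⟩ := exists_injective_nat ι
  let e : ι ↪ κ := (⟨fn, hfn⟩ : ι ↪ ℕ).trans (Infinite.natEmbedding κ)
  have hwi : AlgebraicIndependent ℚ (w ∘ e) := hw.1.comp e e.injective
  set R := Algebra.adjoin ℚ (Set.range v) with hR
  let f : R →+* ℂ :=
    ((MvPolynomial.aeval (w ∘ e) : MvPolynomial ι ℚ →ₐ[ℚ] ℂ) :
        MvPolynomial ι ℚ →+* ℂ).comp (hv.1.aevalEquiv.symm : R ≃ₐ[ℚ] MvPolynomial ι ℚ)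
  have hf : Function.Injective f := by
    have h1 := algebraicIndependent_iff_injective_aeval.1 hwi
    exact fun a b hab => hv.1.aevalEquiv.symm.injective (h1 hab)
  letI : Algebra R ℂ := f.toAlgebra
  haveI : Module.IsTorsionFree R ℂ := Module.isTorsionFree_iff_algebraMap_injective.2 hf
  haveI : Module.IsTorsionFree R K :=
    Module.isTorsionFree_iff_algebraMap_injective.2 Subtype.val_injective
  haveI : Algebra.IsAlgebraic R K := hv.isAlgebraic
  exact ⟨(IsAlgClosed.lift : K →ₐ[R] ℂ).toRingHom⟩

/-- Let `G` be a group.  If every idempotent of the complex group ring `ℂ[G]` is trivial,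
then for every field `F` of characteristic zero every idempotent of `F[G]` is trivial. -/
theorem stmt_12 {G : Type*} [Group G]
    (h : ∀ u : MonoidAlgebra ℂ G, u * u = u → u = 0 ∨ u = 1) :
    ∀ (F : Type*) [Field F] [CharZero F],
      ∀ u : MonoidAlgebra F G, u * u = u → u = 0 ∨ u = 1 := by
  intro F _ _ u hu
  classical
  set s : Finset F := u.coeff.support.image u.coeff with hs
  set K : IntermediateField ℚ F := IntermediateField.adjoin ℚ (↑s : Set F) with hKdef
  have hmem : ∀ g : G, u.coeff g ∈ K := by
    intro g
    by_cases hg : g ∈ u.coeff.support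
    · refine IntermediateField.subset_adjoin ℚ _ ?_
      rw [hs]
      exact Finset.mem_coe.2 (Finset.mem_image_of_mem u.coeff hg)
    · rw [Finsupp.notMem_support_iff.1 hg]; exact zero_mem _
  haveI : CharZero K := charZero_of_injective_algebraMap (algebraMap ℚ K).injective
  have hKcard : #K ≤ ℵ₀ := by
    have h1 := IntermediateField.lift_cardinalMk_adjoin_le ℚ (↑s : Set F)
    rw [← hKdef] at h1
    refine Cardinal.lift_le_aleph0.1 (h1.trans ?_)
    refine max_le (max_le ?_ ?_) le_rfl
    · exact Cardinal.lift_le_aleph0.2 Cardinal.mk_le_aleph0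
    · exact Cardinal.lift_le_aleph0.2 Cardinal.mk_le_aleph0
  obtain ⟨ψ⟩ := exists_ringHom_complex K hKcard
  -- build `v : MonoidAlgebra K G` lifting `u`
  let v : MonoidAlgebra K G :=
    MonoidAlgebra.ofCoeff (Finsupp.mk u.coeff.support (fun g => (⟨u.coeff g, hmem g⟩ : K)) (by
      intro g
      simp [Finsupp.mem_support_iff, Ne, Subtype.ext_iff]))
  have huv : mapCf (algebraMap K F) v = u := by
    rw [mapCf_apply]
    ext g
    simp [v, Finsupp.mapRange_apply]
  have hΦinj : Function.Injective (mapCf (G := G) (algebraMap K F)) :=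
    mapCf_injective (algebraMap K F).injective
  have hv : v * v = v := by
    apply hΦinj
    rw [map_mul, huv, hu]
  have hψv : mapCf ψ v * mapCf ψ v = mapCf ψ v := by rw [← map_mul, hv]
  have hΨinj : Function.Injective (mapCf (G := G) ψ) := mapCf_injective ψ.injective
  rcases h _ hψv with h0 | h1
  · left
    have : v = 0 := hΨinj (by rw [h0, map_zero])
    rw [← huv, this, map_zero]
  · right
    have : v = 1 := hΨinj (by rw [h1, map_one])
    rw [← huv, this, map_one]
end

section
/- Let R be a commutative ring and G a group. Let class_R(G) denote the R-module of finitely supported functions from the set con(G) of conjugacy classes of G to R, and define the universal trace tr^u : M_n(R[G]) → class_R(G) by sending a matrix to the function whose value at a conjugacy class c is the sum, over g ∈ c and over the diagonal entries, of the coefficients of g in those diagonal entries. If A ∈ M_n(R[G]) and B ∈ M_m(R[G]) are matrices with A² = A and B² = B such that the image of right multiplication by A on R[G]ⁿ and the image of right multiplication by B on R[G]^m are isomorphic as left R[G]-modules, then tr^u(A) = tr^u(B). -/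
/-!
An isomorphism between the images of idempotent matrices `A` and `B` lifts to matrices `X`, `Y`
with `X * Y = A` and `Y * X = B`, and the universal trace satisfies `tr(X * Y) = tr(Y * X)`
because `gh` and `hg` are conjugate.
-/

/-- The universal trace `tr^u : Mₙ(R[G]) → class_R(G)`: it sends a square matrix over the
group ring to the finitely supported function on the set of conjugacy classes of `G` whose
value at a class `c` is the sum, over `g ∈ c` and over the diagonal entries, of the
coefficients of `g`.  Concretely, it is obtained from the `Finsupp`-valued trace
`Σᵢ Aᵢᵢ : G →₀ R` by pushing forward along `G → ConjClasses G`. -/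
noncomputable def univTrace {R : Type*} [CommRing R] {G : Type*} [Group G] {n : ℕ}
    (A : Matrix (Fin n) (Fin n) (MonoidAlgebra R G)) : ConjClasses G →₀ R :=
  Finsupp.mapDomain ConjClasses.mk (Matrix.trace A).coeff

open LinearMap

theorem LinearMap.IsIdempotentElem.rangeRestrict_apply_coe {S M : Type*} [Semiring S]
    [AddCommMonoid M] [Module S M] {p : M →ₗ[S] M} (hp : IsIdempotentElem p) (x : range p) :
    p.rangeRestrict x = x :=
  Subtype.ext (hp.mem_range_iff.mp x.2)

theorem LinearMap.exists_comp_eq_of_rangeEquiv {S M N : Type*} [Semiring S]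
    [AddCommMonoid M] [Module S M] [AddCommMonoid N] [Module S N]
    {p : M →ₗ[S] M} {q : N →ₗ[S] N} (hp : IsIdempotentElem p) (hq : IsIdempotentElem q)
    (e : range p ≃ₗ[S] range q) :
    ∃ (f : M →ₗ[S] N) (g : N →ₗ[S] M), g ∘ₗ f = p ∧ f ∘ₗ g = q := by
  refine ⟨(range q).subtype ∘ₗ e.toLinearMap ∘ₗ p.rangeRestrict,
    (range p).subtype ∘ₗ e.symm.toLinearMap ∘ₗ q.rangeRestrict, ?_, ?_⟩
  all_goals ext x; simp [hp.rangeRestrict_apply_coe, hq.rangeRestrict_apply_coe]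

theorem Matrix.isIdempotentElem_toLinearMapRight' {S n : Type*} [Semiring S] [Fintype n]
    [DecidableEq n] {A : Matrix n n S} (hA : IsIdempotentElem A) :
    IsIdempotentElem A.toLinearMapRight' := by
  rw [IsIdempotentElem, Module.End.mul_eq_comp, ← Matrix.toLinearMapRight'_mul, hA.eq]

theorem Matrix.exists_mul_eq_of_rangeEquiv {S m n : Type*} [Semiring S]
    [Fintype m] [DecidableEq m] [Fintype n] [DecidableEq n]
    {A : Matrix n n S} {B : Matrix m m S} (hA : IsIdempotentElem A) (hB : IsIdempotentElem B)
    (e : range A.vecMulLinear ≃ₗ[S] range B.vecMulLinear) :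
    ∃ (X : Matrix n m S) (Y : Matrix m n S), X * Y = A ∧ Y * X = B := by
  obtain ⟨f, g, hgf, hfg⟩ := LinearMap.exists_comp_eq_of_rangeEquiv
    (isIdempotentElem_toLinearMapRight' hA) (isIdempotentElem_toLinearMapRight' hB) e
  refine ⟨toMatrixRight' f, toMatrixRight' g, ?_, ?_⟩ <;>
    apply Matrix.toLinearMapRight'.injective <;>
    simpa [Matrix.toLinearMapRight'_mul]

theorem isConj_mul_comm {G : Type*} [Group G] (g h : G) : IsConj (g * h) (h * g) :=
  isConj_iff.mpr ⟨h, by group⟩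

theorem Matrix.map_trace_mul_comm {m n α β F : Type*} [Fintype m] [Fintype n]
    [NonUnitalNonAssocSemiring α] [AddCommMonoid β] [FunLike F α β] [AddMonoidHomClass F α β]
    (φ : F) (hφ : ∀ a b, φ (a * b) = φ (b * a)) (M : Matrix m n α) (N : Matrix n m α) :
    φ (M * N).trace = φ (N * M).trace := by
  simp only [Matrix.trace, Matrix.diag, Matrix.mul_apply, map_sum, hφ (M _ _)]
  exact Finset.sum_comm

namespace MonoidAlgebra

variable (R : Type*) [CommSemiring R] (G : Type*) [Group G]

noncomputable def conjTrace : MonoidAlgebra R G →ₗ[R] ConjClasses G →₀ R :=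
  Finsupp.lmapDomain R R ConjClasses.mk ∘ₗ (coeffLinearEquiv R).toLinearMap

variable {R G}

theorem conjTrace_single (g : G) (r : R) :
    conjTrace R G (single g r) = Finsupp.single (ConjClasses.mk g) r := by
  simp [conjTrace]

theorem conjTrace_mul_comm (a b : MonoidAlgebra R G) :
    conjTrace R G (a * b) = conjTrace R G (b * a) := by
  induction a using induction_linear with
  | zero => simp
  | add x y hx hy => simp only [add_mul, mul_add, map_add, hx, hy]
  | single g r =>
    induction b using induction_linear with
    | zero => simp
    | add x y hx hy => simp only [add_mul, mul_add, map_add, hx, hy]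
    | single h s =>
      rw [single_mul_single, single_mul_single, conjTrace_single, conjTrace_single,
        ConjClasses.mk_eq_mk_iff_isConj.mpr (isConj_mul_comm g h), mul_comm]

end MonoidAlgebra

theorem univTrace_eq_conjTrace {R : Type*} [CommRing R] {G : Type*} [Group G] {n : ℕ}
    (A : Matrix (Fin n) (Fin n) (MonoidAlgebra R G)) :
    univTrace A = MonoidAlgebra.conjTrace R G A.trace :=
  rfl

theorem univTrace_mul_comm {R : Type*} [CommRing R] {G : Type*} [Group G] {n m : ℕ}
    (X : Matrix (Fin n) (Fin m) (MonoidAlgebra R G))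
    (Y : Matrix (Fin m) (Fin n) (MonoidAlgebra R G)) :
    univTrace (X * Y) = univTrace (Y * X) := by
  rw [univTrace_eq_conjTrace, univTrace_eq_conjTrace]
  exact Matrix.map_trace_mul_comm (MonoidAlgebra.conjTrace R G)
    MonoidAlgebra.conjTrace_mul_comm X Y

/-- Let `R` be a commutative ring and `G` a group.  If `A ∈ Mₙ(R[G])` and `B ∈ Mₘ(R[G])` are
idempotent matrices such that the images of right multiplication by `A` on `R[G]ⁿ` and by `B`
on `R[G]^m` are isomorphic as left `R[G]`-modules, then `tr^u(A) = tr^u(B)`.  (This is the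
well-definedness of the Hattori–Stallings rank of a finitely generated projective
`R[G]`-module.) -/
theorem stmt_14 {R : Type*} [CommRing R] {G : Type*} [Group G] {n m : ℕ}
    (A : Matrix (Fin n) (Fin n) (MonoidAlgebra R G))
    (B : Matrix (Fin m) (Fin m) (MonoidAlgebra R G))
    (hA : A * A = A) (hB : B * B = B)
    (hiso : Nonempty ((LinearMap.range A.vecMulLinear) ≃ₗ[MonoidAlgebra R G]
      (LinearMap.range B.vecMulLinear))) :
    univTrace A = univTrace B := by
  obtain ⟨e⟩ := hiso
  obtain ⟨X, Y, rfl, rfl⟩ := Matrix.exists_mul_eq_of_rangeEquiv hA hB e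
  exact univTrace_mul_comm X Y
end

section
/- Let G₁ and G₂ be virtually cyclic groups. Then the direct product G₁ × G₂ admits a group homomorphism with finite kernel to the direct product D∞ × D∞ of two copies of the infinite dihedral group. -/
open Subgroup

/-- A subgroup intersecting a finite-index subgroup trivially is finite. -/
lemma aux_finite_of_trivial_inter {G : Type*} [Group G] (B S : Subgroup G) [B.FiniteIndex]
    (h : ∀ x ∈ S, x ∈ B → x = 1) : Finite S := by
  have hinj : Function.Injective (fun x : S => (QuotientGroup.mk (x : G) : G ⧸ B)) := by
    intro x y hxy
    rw [QuotientGroup.eq] at hxy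
    have hm : (x : G)⁻¹ * y ∈ S := mul_mem (inv_mem x.2) y.2
    have := h _ hm hxy
    have : (x : G) = y := by
      have h2 := congrArg (fun z => (x : G) * z) this
      simpa [mul_assoc] using h2.symm
    exact Subtype.ext this
  exact Finite.of_injective _ hinj

/-- The key power map: on the centralizer of `t`, some positive power lands in
`zpowers t` and is multiplicative. -/
lemma aux_exists_M {G : Type*} [Group G] (t : G) [(zpowers t).FiniteIndex] :
    ∃ M : ℕ, M ≠ 0 ∧ (∀ k : centralizer ({t} : Set G), (k : G) ^ M ∈ zpowers t) ∧
      (∀ a b : centralizer ({t} : Set G),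
        ((a * b : centralizer ({t} : Set G)) : G) ^ M = (a : G) ^ M * (b : G) ^ M) := by
  set K := centralizer ({t} : Set G) with hKdef
  have htK : t ∈ K := mem_centralizer_singleton_iff.mpr rfl
  set t' : K := ⟨t, htK⟩ with ht'def
  have hNK : zpowers t ≤ K := zpowers_le.mpr htK
  haveI : K.FiniteIndex := finiteIndex_of_le hNK
  have hsub : (zpowers t).subgroupOf K = zpowers t' := by
    ext k
    simp only [mem_subgroupOf, mem_zpowers_iff]
    constructor
    · rintro ⟨a, ha⟩
      exact ⟨a, Subtype.ext (by simpa using ha)⟩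
    · rintro ⟨a, ha⟩
      refine ⟨a, ?_⟩
      have := congrArg (fun z : K => (z : G)) ha
      simpa using this
  haveI hfi1 : (zpowers t').FiniteIndex := by
    constructor
    have h1 := relIndex_mul_index hNK
    intro h0
    rw [show (zpowers t).relIndex K = ((zpowers t).subgroupOf K).index from rfl, hsub, h0,
      zero_mul] at h1
    exact (FiniteIndex.index_ne_zero (H := zpowers t)) h1.symm
  have ht'c : t' ∈ center K := by
    rw [Subgroup.mem_center_iff]
    intro g
    exact Subtype.ext (mem_centralizer_singleton_iff.mp g.2)
  have hc : zpowers t' ≤ center K := zpowers_le.mpr ht'c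
  haveI : (center K).FiniteIndex := finiteIndex_of_le hc
  set n := (center K).index with hndef
  set A := center K with hAdef
  set B' := (zpowers t').subgroupOf A with hB'def
  set m := B'.index with hmdef
  have hm0 : m ≠ 0 := by
    have h1 := relIndex_mul_index hc
    intro h0
    rw [show (zpowers t').relIndex A = B'.index from rfl, ← hmdef, h0, zero_mul] at h1
    exact hfi1.index_ne_zero h1.symm
  have hn0 : n ≠ 0 := FiniteIndex.index_ne_zero
  have hpow_center : ∀ x : A, (x : K) ^ m ∈ zpowers t' := by
    intro x
    have h3 : QuotientGroup.mk' B' (x ^ m) = 1 := by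
      rw [map_pow, hmdef, index_eq_card]
      exact pow_card_eq_one'
    have h4 : x ^ m ∈ B' := by
      rw [← QuotientGroup.ker_mk' B']
      exact h3
    have h5 := mem_subgroupOf.mp h4
    simpa using h5
  refine ⟨n * m, Nat.mul_ne_zero hn0 hm0, ?_, ?_⟩
  · intro k
    have h1 := hpow_center (MonoidHom.transferCenterPow K k)
    have h2 : ((MonoidHom.transferCenterPow K k : K)) = (k : K) ^ n :=
      MonoidHom.transferCenterPow_apply k
    rw [h2, ← pow_mul] at h1
    obtain ⟨a, ha⟩ := mem_zpowers_iff.mp h1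
    refine mem_zpowers_iff.mpr ⟨a, ?_⟩
    have := congrArg (fun z : K => (z : G)) ha
    simpa using this
  · intro a b
    have h2 : ∀ c : K, c ^ n ∈ center K := fun c => (center K).pow_index_mem c
    have hmul_n : (a * b) ^ n = a ^ n * b ^ n := by
      have h3 := map_mul (MonoidHom.transferCenterPow K) a b
      have h4 := congrArg (fun z : center K => (z : K)) h3
      exact h4
    have hcomm : Commute (a ^ n) (b ^ n) := (Subgroup.mem_center_iff.mp (h2 a) (b ^ n)).symm
    have h5 : (a * b) ^ (n * m) = a ^ (n * m) * b ^ (n * m) := by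
      rw [pow_mul, pow_mul, pow_mul, hmul_n, hcomm.mul_pow]
    have := congrArg (fun z : K => (z : G)) h5
    simpa using this

/-- Core lemma: a group with a normal finite-index infinite cyclic subgroup admits a
homomorphism to `D∞` with finite kernel. -/
lemma aux_core {G : Type*} [Group G] (t : G) (ht : ¬ IsOfFinOrder t)
    [(zpowers t).Normal] [(zpowers t).FiniteIndex] :
    ∃ f : G →* DihedralGroup 0, Finite f.ker := by
  classical
  obtain ⟨M, hM0, hmem, hmul⟩ := aux_exists_M t
  set K := centralizer ({t} : Set G) with hKdef
  have htK : t ∈ K := mem_centralizer_singleton_iff.mpr rfl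
  set t' : K := ⟨t, htK⟩ with ht'def
  have hinj : Function.Injective fun a : ℤ => t ^ a :=
    injective_zpow_iff_not_isOfFinOrder.mpr ht
  have hMZ : (M : ℤ) ≠ 0 := Int.natCast_ne_zero.mpr hM0
  -- the "logarithm" P
  set P : K → ℤ := fun k => Classical.choose (mem_zpowers_iff.mp (hmem k)) with hPdef
  have hP : ∀ k : K, t ^ (P k) = (k : G) ^ M :=
    fun k => Classical.choose_spec (mem_zpowers_iff.mp (hmem k))
  have hPmul : ∀ a b : K, P (a * b) = P a + P b := by
    intro a b
    apply hinj
    show t ^ P (a * b) = t ^ (P a + P b)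
    rw [hP, zpow_add, hP, hP]
    exact hmul a b
  have hP1 : P 1 = 0 := by
    apply hinj
    show t ^ P 1 = t ^ (0 : ℤ)
    rw [hP]
    simp
  have hPinv : ∀ k : K, P k⁻¹ = - P k := by
    intro k
    have h := hPmul k k⁻¹
    rw [mul_inv_cancel, hP1] at h
    linarith
  have hPt : ∀ a : ℤ, P (t' ^ a) = a * M := by
    intro a
    apply hinj
    show t ^ P (t' ^ a) = t ^ (a * (M : ℤ))
    rw [hP]
    have hcoe : ((t' ^ a : K) : G) = t ^ a := by simp [ht'def]
    rw [hcoe, zpow_mul, zpow_natCast]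
  -- dichotomy for conjugation
  have htmem : t ∈ zpowers t := mem_zpowers t
  have hdich : ∀ g : G, g * t * g⁻¹ = t ∨ g * t * g⁻¹ = t⁻¹ := by
    intro g
    obtain ⟨a, ha⟩ := mem_zpowers_iff.mp
      (Subgroup.Normal.conj_mem ‹(zpowers t).Normal› t htmem g)
    obtain ⟨b, hb⟩ := mem_zpowers_iff.mp
      (Subgroup.Normal.conj_mem ‹(zpowers t).Normal› t htmem g⁻¹)
    have key : t ^ (a * b) = t ^ (1 : ℤ) := by
      rw [zpow_mul, ha, conj_zpow, hb]
      group
    have hab : a * b = 1 := hinj key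
    rcases Int.eq_one_or_neg_one_of_mul_eq_one' hab with ⟨ha1, _⟩ | ⟨ha1, _⟩
    · left
      rw [ha1] at ha
      simpa using ha.symm
    · right
      rw [ha1] at ha
      rw [← ha]
      simp
  have hKiff : ∀ g : G, g ∈ K ↔ g * t * g⁻¹ = t := by
    intro g
    rw [hKdef, mem_centralizer_singleton_iff]
    constructor
    · intro h
      rw [h]
      group
    · intro h
      have := congrArg (fun z => z * g) h
      simpa [mul_assoc] using this
  have ht2 : t ≠ t⁻¹ := by
    intro h
    apply ht
    refine isOfFinOrder_iff_pow_eq_one.mpr ⟨2, two_pos, ?_⟩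
    rw [pow_two]
    nth_rewrite 2 [h]
    simp
  have hnotK : ∀ g : G, g ∉ K → g * t * g⁻¹ = t⁻¹ := fun g hg =>
    (hdich g).resolve_left fun h => hg ((hKiff g).mpr h)
  by_cases hall : ∀ g : G, g ∈ K
  · -- commutative-with-t case: map to rotations only
    refine ⟨{ toFun := fun x => DihedralGroup.r ((P ⟨x, hall x⟩ : ℤ) : ZMod 0),
              map_one' := ?_, map_mul' := ?_ }, ?_⟩
    · rw [DihedralGroup.one_def]
      apply congrArg
      show P ⟨(1 : G), hall 1⟩ = (0 : ℤ)
      exact hP1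
    · intro x y
      refine Eq.trans ?_ (DihedralGroup.r_mul_r _ _).symm
      apply congrArg
      show P ⟨x * y, hall (x * y)⟩ = P ⟨x, hall x⟩ + P ⟨y, hall y⟩
      exact hPmul ⟨x, hall x⟩ ⟨y, hall y⟩
    · apply aux_finite_of_trivial_inter (zpowers t)
      intro x hx hxN
      rw [MonoidHom.mem_ker] at hx
      simp only [MonoidHom.coe_mk, OneHom.coe_mk] at hx
      have hx' : DihedralGroup.r (n := 0) (P ⟨x, hall x⟩)
          = DihedralGroup.r (n := 0) ((0 : ℤ) : ZMod 0) := hx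
      have hx0 : P ⟨x, hall x⟩ = (0 : ℤ) := DihedralGroup.r.inj hx'
      obtain ⟨a, ha⟩ := mem_zpowers_iff.mp hxN
      have hxt : (⟨x, hall x⟩ : K) = t' ^ a := by
        apply Subtype.ext
        simp [ht'def, ha]
      rw [hxt, hPt] at hx0
      have ha0 : a = 0 := by
        rcases mul_eq_zero.mp hx0 with h | h
        · exact h
        · exact absurd h hMZ
      rw [← ha, ha0]
      simp
  · -- dihedral case
    push_neg at hall
    obtain ⟨s, hsK⟩ := hall
    have hsinv : s * t * s⁻¹ = t⁻¹ := hnotK s hsK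
    have hsinvK : s⁻¹ ∉ K := fun h => hsK (by rwa [inv_mem_iff] at h)
    have hmulKK : ∀ x y : G, x ∉ K → y ∉ K → x * y ∈ K := by
      intro x y hx hy
      rw [hKiff]
      have h1 := hnotK x hx
      have h2 := hnotK y hy
      calc (x * y) * t * (x * y)⁻¹ = x * (y * t * y⁻¹) * x⁻¹ := by group
        _ = x * t⁻¹ * x⁻¹ := by rw [h2]
        _ = (x * t * x⁻¹)⁻¹ := by group
        _ = t := by rw [h1, inv_inv]
    have hmulKn : ∀ x y : G, x ∈ K → (x * y ∈ K ↔ y ∈ K) := by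
      intro x y hx
      constructor
      · intro h
        have := mul_mem (inv_mem hx) h
        simpa [← mul_assoc] using this
      · intro h
        exact mul_mem hx h
    have hσmem : ∀ k : K, s * (k : G) * s⁻¹ ∈ K := by
      intro k
      have h1 : s * (k : G) ∉ K := by
        intro h
        have h2 : s * (k : G) * (k : G)⁻¹ ∈ K := mul_mem h (inv_mem k.2)
        simp only [mul_assoc, mul_inv_cancel, mul_one] at h2
        exact hsK h2
      exact hmulKK _ _ h1 hsinvK
    set σ : K → K := fun k => ⟨s * (k : G) * s⁻¹, hσmem k⟩ with hσdef
    have hσmul : ∀ a b : K, σ (a * b) = σ a * σ b := by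
      intro a b
      apply Subtype.ext
      show s * ((a : G) * (b : G)) * s⁻¹ = (s * (a : G) * s⁻¹) * (s * (b : G) * s⁻¹)
      group
    set P' : K → ℤ := fun k => P k - P (σ k) with hP'def
    have hP'mul : ∀ a b : K, P' (a * b) = P' a + P' b := by
      intro a b
      simp only [hP'def, hσmul, hPmul]
      ring
    have hP'1 : P' 1 = 0 := by
      have h := hP'mul 1 1
      rw [mul_one] at h
      linarith
    have hs2K : s * s ∈ K := hmulKK s s hsK hsK
    have hPconj : ∀ (c k : K), P (c * k * c⁻¹) = P k := by
      intro c k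
      rw [hPmul, hPmul, hPinv]
      ring
    have hσσ : ∀ k : K, σ (σ k) = ⟨s * s, hs2K⟩ * k * (⟨s * s, hs2K⟩ : K)⁻¹ := by
      intro k
      apply Subtype.ext
      show s * (s * (k : G) * s⁻¹) * s⁻¹ = (s * s) * (k : G) * (s * s)⁻¹
      group
    have hP'σ : ∀ k : K, P' (σ k) = - P' k := by
      intro k
      have h1 : P (σ (σ k)) = P k := by rw [hσσ]; exact hPconj _ _
      simp only [hP'def]
      rw [h1]
      ring
    have hP's2 : P' ⟨s * s, hs2K⟩ = 0 := by
      have h1 : σ ⟨s * s, hs2K⟩ = ⟨s * s, hs2K⟩ := by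
        apply Subtype.ext
        show s * (s * s) * s⁻¹ = s * s
        group
      simp only [hP'def, h1, sub_self]
    have hσt : ∀ a : ℤ, σ (t' ^ a) = t' ^ (-a) := by
      intro a
      apply Subtype.ext
      show s * ((t' ^ a : K) : G) * s⁻¹ = ((t' ^ (-a) : K) : G)
      have h1 : ((t' ^ a : K) : G) = t ^ a := by simp [ht'def]
      have h2 : ((t' ^ (-a) : K) : G) = t ^ (-a) := by simp [ht'def]
      rw [h1, h2, ← conj_zpow, hsinv]
      simp
    have hP't : ∀ a : ℤ, P' (t' ^ a) = 2 * a * M := by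
      intro a
      simp only [hP'def]
      rw [hσt, hPt, hPt]
      ring
    have hxs : ∀ x : G, x ∉ K → x * s⁻¹ ∈ K := fun x hx => hmulKK x s⁻¹ hx hsinvK
    refine ⟨{ toFun := fun x =>
                if h : x ∈ K then DihedralGroup.r ((P' ⟨x, h⟩ : ℤ) : ZMod 0)
                else DihedralGroup.sr ((-(P' ⟨x * s⁻¹, hxs x h⟩) : ℤ) : ZMod 0),
              map_one' := ?_, map_mul' := ?_ }, ?_⟩
    · rw [dif_pos (one_mem K), DihedralGroup.one_def]
      apply congrArg
      show P' ⟨(1 : G), one_mem K⟩ = (0 : ℤ)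
      exact hP'1
    · intro x y
      by_cases hx : x ∈ K <;> by_cases hy : y ∈ K
      · have hxy : x * y ∈ K := mul_mem hx hy
        rw [dif_pos hxy, dif_pos hx, dif_pos hy]; refine Eq.trans ?_ (DihedralGroup.r_mul_r _ _).symm
        apply congrArg
        show P' ⟨x * y, hxy⟩ = P' ⟨x, hx⟩ + P' ⟨y, hy⟩
        exact hP'mul ⟨x, hx⟩ ⟨y, hy⟩
      · have hxy : x * y ∉ K := fun h => hy ((hmulKn x y hx).mp h)
        rw [dif_neg hxy, dif_pos hx, dif_neg hy]; refine Eq.trans ?_ (DihedralGroup.r_mul_sr _ _).symm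
        have he : (⟨x * y * s⁻¹, hxs _ hxy⟩ : K) = ⟨x, hx⟩ * ⟨y * s⁻¹, hxs y hy⟩ := by
          apply Subtype.ext
          show x * y * s⁻¹ = x * (y * s⁻¹)
          group
        apply congrArg
        show -(P' ⟨x * y * s⁻¹, hxs _ hxy⟩) = -(P' ⟨y * s⁻¹, hxs y hy⟩) - P' ⟨x, hx⟩
        rw [he, hP'mul]
        ring
      · have hxy : x * y ∉ K := by
          intro h
          have h2 : x * y * y⁻¹ ∈ K := mul_mem h (inv_mem hy)
          simp only [mul_assoc, mul_inv_cancel, mul_one] at h2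
          exact hx h2
        rw [dif_neg hxy, dif_neg hx, dif_pos hy]; refine Eq.trans ?_ (DihedralGroup.sr_mul_r _ _).symm
        have he : (⟨x * y * s⁻¹, hxs _ hxy⟩ : K)
            = ⟨x * s⁻¹, hxs x hx⟩ * σ ⟨y, hy⟩ := by
          apply Subtype.ext
          show x * y * s⁻¹ = (x * s⁻¹) * (s * y * s⁻¹)
          group
        apply congrArg
        show -(P' ⟨x * y * s⁻¹, hxs _ hxy⟩) = -(P' ⟨x * s⁻¹, hxs x hx⟩) + P' ⟨y, hy⟩
        rw [he, hP'mul, hP'σ]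
        ring
      · have hxy : x * y ∈ K := hmulKK x y hx hy
        rw [dif_pos hxy, dif_neg hx, dif_neg hy]; refine Eq.trans ?_ (DihedralGroup.sr_mul_sr _ _).symm
        have hsyK : s * y ∈ K := hmulKK s y hsK hy
        have he : (⟨x * y, hxy⟩ : K) = ⟨x * s⁻¹, hxs x hx⟩ * ⟨s * y, hsyK⟩ := by
          apply Subtype.ext
          show x * y = (x * s⁻¹) * (s * y)
          group
        have he2 : (⟨s * y, hsyK⟩ : K) = σ ⟨y * s⁻¹, hxs y hy⟩ * ⟨s * s, hs2K⟩ := by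
          apply Subtype.ext
          show s * y = (s * (y * s⁻¹) * s⁻¹) * (s * s)
          group
        apply congrArg
        show P' ⟨x * y, hxy⟩ = -(P' ⟨y * s⁻¹, hxs y hy⟩) - -(P' ⟨x * s⁻¹, hxs x hx⟩)
        rw [he, hP'mul, he2, hP'mul, hP'σ, hP's2]
        ring
    · apply aux_finite_of_trivial_inter (zpowers t)
      intro x hx hxN
      have hxK : x ∈ K := zpowers_le.mpr htK hxN
      rw [MonoidHom.mem_ker] at hx
      simp only [MonoidHom.coe_mk, OneHom.coe_mk] at hx
      rw [dif_pos hxK] at hx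
      have hx' : DihedralGroup.r (n := 0) (P' ⟨x, hxK⟩)
          = DihedralGroup.r (n := 0) ((0 : ℤ) : ZMod 0) := hx
      have hx0 : P' ⟨x, hxK⟩ = (0 : ℤ) := DihedralGroup.r.inj hx'
      obtain ⟨a, ha⟩ := mem_zpowers_iff.mp hxN
      have hxt : (⟨x, hxK⟩ : K) = t' ^ a := by
        apply Subtype.ext
        simp [ht'def, ha]
      rw [hxt, hP't] at hx0
      have ha0 : a = 0 := by
        rcases mul_eq_zero.mp hx0 with h | h
        · rcases mul_eq_zero.mp h with h' | h'
          · norm_num at h'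
          · exact h'
        · exact absurd h hMZ
      rw [← ha, ha0]
      simp

/-- Every virtually cyclic group admits a homomorphism to `D∞` with finite kernel. -/
lemma VirtuallyCyclic.exists_hom_dihedral {G : Type*} [Group G] (h : VirtuallyCyclic G) :
    ∃ f : G →* DihedralGroup 0, Finite f.ker := by
  obtain ⟨H, hHc, hHi⟩ := h
  haveI := hHi
  haveI := hHc
  set N := H.normalCore with hNdef
  haveI : N.FiniteIndex := H.finiteIndex_normalCore
  haveI : IsCyclic N := Subgroup.isCyclic_of_le H.normalCore_le
  by_cases hfin : Finite N
  · -- G is finite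
    have hcard : Nat.card G ≠ 0 := by
      rw [← N.card_mul_index]
      have h1 : Nat.card N ≠ 0 := Nat.card_pos.ne'
      have h2 : N.index ≠ 0 := FiniteIndex.index_ne_zero
      positivity
    haveI : Finite G := Nat.finite_of_card_ne_zero hcard
    exact ⟨1, Subtype.finite⟩
  · haveI : Infinite N := not_finite_iff_infinite.mp hfin
    obtain ⟨g, hg⟩ := (inferInstance : IsCyclic N).exists_generator
    set t : G := (g : G) with htdef
    have hNt : zpowers t = N := by
      apply le_antisymm
      · exact zpowers_le.mpr g.2
      · intro x hx
        obtain ⟨a, ha⟩ := mem_zpowers_iff.mp (hg ⟨x, hx⟩)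
        refine mem_zpowers_iff.mpr ⟨a, ?_⟩
        have := congrArg (fun z : N => (z : G)) ha
        simpa using this
    have ht : ¬ IsOfFinOrder t := by
      rw [← orderOf_eq_zero_iff]
      have h1 : Nat.card (zpowers t) = 0 := by
        rw [hNt]
        exact Nat.card_eq_zero_of_infinite
      rw [← Nat.card_zpowers]
      exact h1
    haveI : (zpowers t).Normal := by rw [hNt]; infer_instance
    haveI : (zpowers t).FiniteIndex := by rw [hNt]; infer_instance
    exact aux_core t ht

/-- Let `G₁` and `G₂` be virtually cyclic groups.  Then `G₁ × G₂` admits a group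
homomorphism with finite kernel to `D∞ × D∞`, the direct product of two copies of the
infinite dihedral group (`DihedralGroup 0`). -/
theorem stmt_15 {G₁ G₂ : Type*} [Group G₁] [Group G₂]
    (h₁ : VirtuallyCyclic G₁) (h₂ : VirtuallyCyclic G₂) :
    ∃ f : G₁ × G₂ →* DihedralGroup 0 × DihedralGroup 0, Finite f.ker := by
  obtain ⟨f₁, hf₁⟩ := h₁.exists_hom_dihedral
  obtain ⟨f₂, hf₂⟩ := h₂.exists_hom_dihedral
  refine ⟨f₁.prodMap f₂, ?_⟩
  rw [MonoidHom.ker_prodMap]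
  exact Finite.of_equiv _ (Subgroup.prodEquiv f₁.ker f₂.ker).toEquiv.symm
end
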